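/- arXiv:1307.0430 — 7 statements merged into one kernel-verified Lean document; each statement's English description precedes it below -/
import Mathlib

section
/- Let M = B ×_f F be a twisted product of Riemannian manifolds. The fibers {b} × F have parallel mean curvature vector (in the normal connection) if and only if the twisting function f factors as f(b,p) = λ(b)·μ(p) for positive functions λ on B and μ on F. -/
open ContinuousLinearMap

section Aux
variable {E F : Type*} [NormedAddCommGroup E] [NormedSpace ℝ E]
  [NormedAddCommGroup F] [NormedSpace ℝ F]

theorem aux_split_stmt1 (φ : E × F → ℝ) (hφ : ContDiff ℝ (⊤ : ℕ∞) φ)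
    (hmix : ∀ (b : E) (y : F) (X : F) (Z : E),
      fderiv ℝ (fun z => (fderiv ℝ φ z) (Z, 0)) (b, y) (0, X) = 0)
    (b : E) (y : F) : φ (b, y) + φ (0, 0) = φ (b, 0) + φ (0, y) := by
  have hφd : Differentiable ℝ φ := hφ.differentiable (by simp)
  have hΨ : ∀ Z : E, Differentiable ℝ (fun z : E × F => (fderiv ℝ φ z) (Z, 0)) := by
    intro Z
    exact (((hφ.fderiv_right (m := 1) (by exact WithTop.coe_le_coe.mpr le_top)).clm_apply contDiff_const)).differentiable one_ne_zero
  have stepA : ∀ (b : E) (y : F) (Z : E),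
      (fderiv ℝ φ (b, y)) (Z, 0) = (fderiv ℝ φ (b, 0)) (Z, 0) := by
    intro b y Z
    have hu : ∀ y : F, HasFDerivAt (fun y' : F => (fderiv ℝ φ (b, y')) (Z, 0))
        ((fderiv ℝ (fun z : E × F => (fderiv ℝ φ z) (Z, 0)) (b, y)).comp (inr ℝ E F)) y :=
      fun y => ((hΨ Z (b, y)).hasFDerivAt).comp y (hasFDerivAt_prodMk_right b y)
    exact is_const_of_fderiv_eq_zero (fun y => ((hu y).differentiableAt))
      (fun y => by
        rw [(hu y).fderiv]
        ext X
        simp [hmix b y X Z]) y 0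
  have hψ : ∀ b : E, HasFDerivAt (fun b' : E => φ (b', y) - φ (b', 0))
      ((fderiv ℝ φ (b, y)).comp (inl ℝ E F) - (fderiv ℝ φ (b, 0)).comp (inl ℝ E F)) b :=
    fun b => (((hφd (b, y)).hasFDerivAt).comp b (hasFDerivAt_prodMk_left b y)).sub
      (((hφd (b, 0)).hasFDerivAt).comp b (hasFDerivAt_prodMk_left b 0))
  have hB := is_const_of_fderiv_eq_zero (fun b => ((hψ b).differentiableAt))
    (fun b => by
      rw [(hψ b).fderiv]
      ext Z
      simp [stepA b y Z]) b 0
  beta_reduce at hB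
  linarith [hB]

theorem aux_mixed_zero_stmt1 (φ : E × F → ℝ) (A : E → ℝ) (B : F → ℝ)
    (hA : ContDiff ℝ (⊤ : ℕ∞) A) (hB : ContDiff ℝ (⊤ : ℕ∞) B)
    (hsplit : ∀ z : E × F, φ z = A z.1 + B z.2)
    (b : E) (y : F) (X : F) (Z : E) :
    fderiv ℝ (fun z => (fderiv ℝ φ z) (Z, 0)) (b, y) (0, X) = 0 := by
  have hAd : Differentiable ℝ A := hA.differentiable (by simp)
  have hBd : Differentiable ℝ B := hB.differentiable (by simp)
  have hfun : (fun z : E × F => (fderiv ℝ φ z) (Z, 0)) =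
      fun z : E × F => (fderiv ℝ A z.1) Z := by
    funext z
    have h1 : HasFDerivAt φ
        ((fderiv ℝ A z.1).comp (fst ℝ E F) + (fderiv ℝ B z.2).comp (snd ℝ E F)) z := by
      have h2 : HasFDerivAt (fun w : E × F => A w.1 + B w.2)
          ((fderiv ℝ A z.1).comp (fst ℝ E F) + (fderiv ℝ B z.2).comp (snd ℝ E F)) z :=
        (((hAd z.1).hasFDerivAt).comp z hasFDerivAt_fst).add
          (((hBd z.2).hasFDerivAt).comp z hasFDerivAt_snd)
      exact h2.congr_of_eventuallyEq (Filter.Eventually.of_forall fun w => (hsplit w))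
    rw [h1.fderiv]
    simp
  rw [hfun]
  have hAZ : Differentiable ℝ (fun b : E => (fderiv ℝ A b) Z) :=
    ((hA.fderiv_right (m := 1) (by exact WithTop.coe_le_coe.mpr le_top)).clm_apply contDiff_const).differentiable one_ne_zero
  have h2 : HasFDerivAt (fun z : E × F => (fderiv ℝ A z.1) Z)
      ((fderiv ℝ (fun b : E => (fderiv ℝ A b) Z) b).comp (fst ℝ E F)) (b, y) :=
    ((hAZ (b, y).1).hasFDerivAt).comp (b, y) hasFDerivAt_fst
  rw [h2.fderiv]
  simp

end Aux


/- STATEMENT 1: In a twisted product B ×_f F (chart picture, metric g = gB + f² gF),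
   the fibers {b} × F have parallel mean curvature vector if and only if
   f(b,p) = λ(b)·μ(p) for positive functions λ on B and μ on F.
   The mean curvature vector of the fiber is H = −∇_B(log f) (field Hf below), and
   parallelness means that for every fiber-tangent X and every normal (base) direction Z,
   g(∇_{(0,X)} H, (Z,0)) = ∂_{(0,X)} g(H,(Z,0)) − g(H, ∇_{(0,X)}(Z,0)) vanishes,
   where ∇_{(0,X)}(Z,0) is characterized by the Koszul formula. -/
theorem stmt_1 {p q : ℕ}
    (gB : EuclideanSpace ℝ (Fin p) →
      EuclideanSpace ℝ (Fin p) → EuclideanSpace ℝ (Fin p) → ℝ)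
    (gF : EuclideanSpace ℝ (Fin q) →
      EuclideanSpace ℝ (Fin q) → EuclideanSpace ℝ (Fin q) → ℝ)
    (hgBsymm : ∀ b X Y, gB b X Y = gB b Y X)
    (hgBlin : ∀ b Y, IsLinearMap ℝ (fun X => gB b X Y))
    (hgBpos : ∀ b X, X ≠ 0 → 0 < gB b X X)
    (hgBsmooth : ∀ X Y, ContDiff ℝ (⊤ : ℕ∞) (fun b => gB b X Y))
    (hgFsymm : ∀ y X Y, gF y X Y = gF y Y X)
    (hgFlin : ∀ y Y, IsLinearMap ℝ (fun X => gF y X Y))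
    (hgFpos : ∀ y X, X ≠ 0 → 0 < gF y X X)
    (hgFsmooth : ∀ X Y, ContDiff ℝ (⊤ : ℕ∞) (fun y => gF y X Y))
    (f : EuclideanSpace ℝ (Fin p) × EuclideanSpace ℝ (Fin q) → ℝ)
    (hfpos : ∀ z, 0 < f z) (hfsmooth : ContDiff ℝ (⊤ : ℕ∞) f)
    (g : EuclideanSpace ℝ (Fin p) × EuclideanSpace ℝ (Fin q) →
      (EuclideanSpace ℝ (Fin p) × EuclideanSpace ℝ (Fin q)) →
      (EuclideanSpace ℝ (Fin p) × EuclideanSpace ℝ (Fin q)) → ℝ)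
    (hg : ∀ z X Y, g z X Y = gB z.1 X.1 Y.1 + (f z) ^ 2 * gF z.2 X.2 Y.2)
    -- Hf = mean curvature vector field of the fibers: Hf = −∇_B log f
    (Hf : EuclideanSpace ℝ (Fin p) × EuclideanSpace ℝ (Fin q) → EuclideanSpace ℝ (Fin p))
    (hHf : ∀ b y Z, gB b (Hf (b, y)) Z =
      -(fderiv ℝ (fun z => Real.log (f z)) (b, y)) (Z, 0)) :
    -- fibers have parallel mean curvature vector
    (∀ (b : EuclideanSpace ℝ (Fin p)) (y : EuclideanSpace ℝ (Fin q))
       (X : EuclideanSpace ℝ (Fin q)) (Z : EuclideanSpace ℝ (Fin p))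
       (Γ : EuclideanSpace ℝ (Fin p) × EuclideanSpace ℝ (Fin q)),
      (∀ W, g (b, y) Γ W =
          (fderiv ℝ (fun z => g z (Z, (0 : EuclideanSpace ℝ (Fin q))) W) (b, y)) (0, X) / 2
        + (fderiv ℝ (fun z => g z ((0 : EuclideanSpace ℝ (Fin p)), X) W) (b, y))
            (Z, (0 : EuclideanSpace ℝ (Fin q))) / 2
        - (fderiv ℝ (fun z => g z ((0 : EuclideanSpace ℝ (Fin p)), X)
            (Z, (0 : EuclideanSpace ℝ (Fin q)))) (b, y)) W / 2) →
      fderiv ℝ (fun z => g z (Hf z, (0 : EuclideanSpace ℝ (Fin q)))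
          (Z, (0 : EuclideanSpace ℝ (Fin q)))) (b, y) (0, X)
        - g (b, y) (Hf (b, y), (0 : EuclideanSpace ℝ (Fin q))) Γ = 0)
    ↔
    -- f is a product of positive functions of B and of F separately
    (∃ (lam : EuclideanSpace ℝ (Fin p) → ℝ) (mu : EuclideanSpace ℝ (Fin q) → ℝ),
      (∀ b, 0 < lam b) ∧ (∀ y, 0 < mu y) ∧ ∀ z, f z = lam z.1 * mu z.2) := by
  have hfne : ∀ z, f z ≠ 0 := fun z => (hfpos z).ne'
  set φ : EuclideanSpace ℝ (Fin p) × EuclideanSpace ℝ (Fin q) → ℝ :=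
    fun z => Real.log (f z) with hφdef
  have hφ : ContDiff ℝ (⊤ : ℕ∞) φ := hfsmooth.log hfne
  have hfd : Differentiable ℝ f := hfsmooth.differentiable (by simp)
  have hgFz : ∀ (y : EuclideanSpace ℝ (Fin q)) V, gF y V (0 : EuclideanSpace ℝ (Fin q)) = 0 :=
    fun y V => by rw [hgFsymm]; exact (hgFlin y V).map_zero
  -- Koszul RHS computation
  have hRHS : ∀ (b : EuclideanSpace ℝ (Fin p)) (y X : EuclideanSpace ℝ (Fin q))
      (Z : EuclideanSpace ℝ (Fin p)) (W : _ × _),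
      (fderiv ℝ (fun z => g z (Z, (0 : EuclideanSpace ℝ (Fin q))) W) (b, y)) (0, X) / 2
        + (fderiv ℝ (fun z => g z ((0 : EuclideanSpace ℝ (Fin p)), X) W) (b, y))
            (Z, (0 : EuclideanSpace ℝ (Fin q))) / 2
        - (fderiv ℝ (fun z => g z ((0 : EuclideanSpace ℝ (Fin p)), X)
            (Z, (0 : EuclideanSpace ℝ (Fin q)))) (b, y)) W / 2
      = f (b, y) * (fderiv ℝ f (b, y)) (Z, 0) * gF y X W.2 := by
    intro b y X Z W
    have e1 : (fun z : EuclideanSpace ℝ (Fin p) × EuclideanSpace ℝ (Fin q) =>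
        g z (Z, (0 : EuclideanSpace ℝ (Fin q))) W) = fun z => gB z.1 Z W.1 := by
      funext z
      rw [hg]
      simp [(hgFlin z.2 W.2).map_zero]
    have h1 : HasFDerivAt (fun z : EuclideanSpace ℝ (Fin p) × EuclideanSpace ℝ (Fin q) =>
        gB z.1 Z W.1)
        ((fderiv ℝ (fun b => gB b Z W.1) b).comp (fst ℝ _ _)) (b, y) :=
      (((hgBsmooth Z W.1).differentiable (by simp) (b, y).1).hasFDerivAt).comp (b, y) hasFDerivAt_fst
    have t1 : (fderiv ℝ (fun z => g z (Z, (0 : EuclideanSpace ℝ (Fin q))) W) (b, y)) (0, X)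
        = 0 := by
      rw [e1, h1.fderiv]
      simp
    have e2 : (fun z : EuclideanSpace ℝ (Fin p) × EuclideanSpace ℝ (Fin q) =>
        g z ((0 : EuclideanSpace ℝ (Fin p)), X) W) = fun z => f z ^ 2 * gF z.2 X W.2 := by
      funext z
      rw [hg]
      simp [(hgBlin z.1 W.1).map_zero]
    have hsq : HasFDerivAt (fun z : EuclideanSpace ℝ (Fin p) × EuclideanSpace ℝ (Fin q) =>
        f z ^ 2)
        (f (b, y) • fderiv ℝ f (b, y) + f (b, y) • fderiv ℝ f (b, y)) (b, y) := by
      have h := ((hfd (b, y)).hasFDerivAt).mul ((hfd (b, y)).hasFDerivAt)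
      simp only [pow_two]
      exact h
    have hG : HasFDerivAt (fun z : EuclideanSpace ℝ (Fin p) × EuclideanSpace ℝ (Fin q) =>
        gF z.2 X W.2)
        ((fderiv ℝ (fun y => gF y X W.2) y).comp (snd ℝ _ _)) (b, y) :=
      (((hgFsmooth X W.2).differentiable (by simp) (b, y).2).hasFDerivAt).comp (b, y) hasFDerivAt_snd
    have t2 : (fderiv ℝ (fun z => g z ((0 : EuclideanSpace ℝ (Fin p)), X) W) (b, y))
        (Z, (0 : EuclideanSpace ℝ (Fin q)))
        = 2 * f (b, y) * (fderiv ℝ f (b, y)) (Z, 0) * gF y X W.2 := by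
      rw [e2, (hsq.fun_mul hG).fderiv]
      simp
      ring
    have e3 : (fun z : EuclideanSpace ℝ (Fin p) × EuclideanSpace ℝ (Fin q) =>
        g z ((0 : EuclideanSpace ℝ (Fin p)), X) (Z, (0 : EuclideanSpace ℝ (Fin q))))
        = fun _ => (0 : ℝ) := by
      funext z
      rw [hg]
      simp [(hgBlin z.1 Z).map_zero, hgFz z.2 X]
    have t3 : (fderiv ℝ (fun z => g z ((0 : EuclideanSpace ℝ (Fin p)), X)
        (Z, (0 : EuclideanSpace ℝ (Fin q)))) (b, y)) W = 0 := by
      rw [e3]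
      simp
    rw [t1, t2, t3]
    ring
  have hterm1 : ∀ Z : EuclideanSpace ℝ (Fin p),
      (fun z : EuclideanSpace ℝ (Fin p) × EuclideanSpace ℝ (Fin q) =>
        g z (Hf z, (0 : EuclideanSpace ℝ (Fin q))) (Z, (0 : EuclideanSpace ℝ (Fin q))))
      = fun z => -((fderiv ℝ φ z) (Z, 0)) := by
    intro Z
    funext z
    obtain ⟨z1, z2⟩ := z
    rw [hg]
    simp [(hgFlin z2 (0 : EuclideanSpace ℝ (Fin q))).map_zero, hHf z1 z2 Z]
  have key : (∀ (b : EuclideanSpace ℝ (Fin p)) (y : EuclideanSpace ℝ (Fin q))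
       (X : EuclideanSpace ℝ (Fin q)) (Z : EuclideanSpace ℝ (Fin p))
       (Γ : EuclideanSpace ℝ (Fin p) × EuclideanSpace ℝ (Fin q)),
      (∀ W, g (b, y) Γ W =
          (fderiv ℝ (fun z => g z (Z, (0 : EuclideanSpace ℝ (Fin q))) W) (b, y)) (0, X) / 2
        + (fderiv ℝ (fun z => g z ((0 : EuclideanSpace ℝ (Fin p)), X) W) (b, y))
            (Z, (0 : EuclideanSpace ℝ (Fin q))) / 2
        - (fderiv ℝ (fun z => g z ((0 : EuclideanSpace ℝ (Fin p)), X)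
            (Z, (0 : EuclideanSpace ℝ (Fin q)))) (b, y)) W / 2) →
      fderiv ℝ (fun z => g z (Hf z, (0 : EuclideanSpace ℝ (Fin q)))
          (Z, (0 : EuclideanSpace ℝ (Fin q)))) (b, y) (0, X)
        - g (b, y) (Hf (b, y), (0 : EuclideanSpace ℝ (Fin q))) Γ = 0)
      ↔ (∀ (b : EuclideanSpace ℝ (Fin p)) (y X : EuclideanSpace ℝ (Fin q))
          (Z : EuclideanSpace ℝ (Fin p)),
        fderiv ℝ (fun z => (fderiv ℝ φ z) (Z, 0)) (b, y) (0, X) = 0) := by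
    constructor
    · intro P b y X Z
      set c : ℝ := (fderiv ℝ f (b, y)) (Z, 0) / f (b, y) with hc
      have hprem : ∀ W, g (b, y) ((0 : EuclideanSpace ℝ (Fin p)), c • X) W =
          (fderiv ℝ (fun z => g z (Z, (0 : EuclideanSpace ℝ (Fin q))) W) (b, y)) (0, X) / 2
        + (fderiv ℝ (fun z => g z ((0 : EuclideanSpace ℝ (Fin p)), X) W) (b, y))
            (Z, (0 : EuclideanSpace ℝ (Fin q))) / 2
        - (fderiv ℝ (fun z => g z ((0 : EuclideanSpace ℝ (Fin p)), X)
            (Z, (0 : EuclideanSpace ℝ (Fin q)))) (b, y)) W / 2 := by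
        intro W
        have h0 : gB b (0 : EuclideanSpace ℝ (Fin p)) W.1 = 0 := (hgBlin b W.1).map_zero
        have hsm : gF y (c • X) W.2 = c * gF y X W.2 := by
          simpa [smul_eq_mul] using (hgFlin y W.2).map_smul c X
        rw [hg, hRHS b y X Z W]
        simp only [h0, hsm]
        simp only [hc]
        rw [div_mul_eq_mul_div, ← mul_div_assoc, zero_add, div_eq_iff (hfne (b, y))]
        ring
      have hP := P b y X Z ((0 : EuclideanSpace ℝ (Fin p)), c • X) hprem
      rw [hterm1 Z] at hP
      have hGf0 : g (b, y) (Hf (b, y), (0 : EuclideanSpace ℝ (Fin q)))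
          ((0 : EuclideanSpace ℝ (Fin p)), c • X) = 0 := by
        rw [hg, hgBsymm]
        simp [(hgBlin b (Hf (b, y))).map_zero, (hgFlin y (c • X)).map_zero]
      rw [hGf0, sub_zero, fderiv_fun_neg] at hP
      simpa using hP
    · intro hmix b y X Z Γ hK
      have hKW := hK (Hf (b, y), (0 : EuclideanSpace ℝ (Fin q)))
      rw [hRHS b y X Z (Hf (b, y), (0 : EuclideanSpace ℝ (Fin q))), hg] at hKW
      simp only [hgFz y X, mul_zero] at hKW
      have hG1 : gB b Γ.1 (Hf (b, y)) = 0 := by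
        have h2 : gF y Γ.2 (0 : EuclideanSpace ℝ (Fin q)) = 0 := hgFz y Γ.2
        simpa [h2] using hKW
      rw [hterm1 Z, fderiv_fun_neg, hg]
      have h3 : gF y (0 : EuclideanSpace ℝ (Fin q)) Γ.2 = 0 := (hgFlin y Γ.2).map_zero
      simp [h3, hgBsymm b (Hf (b, y)) Γ.1, hG1, hmix b y X Z]
  rw [key]
  constructor
  · intro hmix
    refine ⟨fun b => f (b, 0), fun y => f (0, y) / f (0, 0),
      fun b => hfpos _, fun y => div_pos (hfpos _) (hfpos _), ?_⟩
    intro z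
    have hs := aux_split_stmt1 φ hφ hmix z.1 z.2
    have hmul : f z * f (0, 0) = f (z.1, 0) * f (0, z.2) := by
      have h := congrArg Real.exp hs
      rw [Real.exp_add, Real.exp_add] at h
      simp only [hφdef, Real.exp_log (hfpos _)] at h
      simpa using h
    show f z = f (z.1, 0) * (f (0, z.2) / f (0, 0))
    rw [← mul_div_assoc, eq_div_iff (hfne (0, 0))]
    linarith [hmul]
  · rintro ⟨lam, mu, hlam, hmu, hprod⟩ b y X Z
    have hA : ContDiff ℝ (⊤ : ℕ∞) (fun b : EuclideanSpace ℝ (Fin p) => Real.log (f (b, 0))) :=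
      (hfsmooth.comp (contDiff_id.prodMk contDiff_const)).log fun b => hfne _
    have hB : ContDiff ℝ (⊤ : ℕ∞) (fun y : EuclideanSpace ℝ (Fin q) =>
        Real.log (f (0, y)) - Real.log (f (0, 0))) :=
      ((hfsmooth.comp (contDiff_const.prodMk contDiff_id)).log fun y => hfne _).sub contDiff_const
    refine aux_mixed_zero_stmt1 φ _ _ hA hB ?_ b y X Z
    intro z
    have h1 := hprod z
    have h2 := hprod (z.1, (0 : EuclideanSpace ℝ (Fin q)))
    have h3 := hprod ((0 : EuclideanSpace ℝ (Fin p)), z.2)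
    have h4 := hprod ((0 : EuclideanSpace ℝ (Fin p)), (0 : EuclideanSpace ℝ (Fin q)))
    simp only at h1 h2 h3 h4
    simp only [hφdef, h1, h2, h3, h4]
    rw [Real.log_mul (hlam _).ne' (hmu _).ne', Real.log_mul (hlam _).ne' (hmu _).ne',
      Real.log_mul (hlam _).ne' (hmu _).ne', Real.log_mul (hlam _).ne' (hmu _).ne']
    ring
end

section
/- Let M be an n-dimensional submanifold of Euclidean space E^m with parallel mean curvature vector (DH = 0). If M is biharmonic, i.e., its immersion φ satisfies Δ²φ = 0, equivalently Δ^D H + Σ_{i=1}^n h(A_H e_i, e_i) = 0 and n∇⟨H,H⟩ + 4 trace A_{DH} = 0, then M is minimal (H = 0). -/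
open RealInnerProductSpace

/- STATEMENT 3: A biharmonic submanifold of Euclidean space with parallel mean curvature
   vector is minimal.  T is the tangent space and N the normal space at a point of the
   n-dimensional submanifold M ⊂ E^m, h the second fundamental form, A the shape
   operator, H = (trace h)/n the mean curvature vector, DH the normal derivative of H
   (parallel: DH = 0, which forces the normal Laplacian Δ^D H to vanish), and the
   biharmonicity of the immersion is expressed by the two equations
   Δ^D H + Σ h(A_H eᵢ, eᵢ) = 0 and n ∇⟨H,H⟩ + 4 trace A_{DH} = 0. -/
theorem stmt_3 {T N : Type*} [NormedAddCommGroup T] [InnerProductSpace ℝ T]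
    [NormedAddCommGroup N] [InnerProductSpace ℝ N] {n : ℕ} (hn : 0 < n)
    (e : OrthonormalBasis (Fin n) ℝ T)
    (h : T →ₗ[ℝ] T →ₗ[ℝ] N) (A : N → T →ₗ[ℝ] T)
    (hsymm : ∀ X Y, h X Y = h Y X)
    (hA : ∀ (ξ : N) (X Y : T), ⟪h X Y, ξ⟫ = ⟪A ξ X, Y⟫)
    (H : N) (hH : H = (n : ℝ)⁻¹ • ∑ i, h (e i) (e i))
    (DH : T → N) (hparallel : ∀ X, DH X = 0)
    (ΔDH : N) (hlap : (∀ X, DH X = 0) → ΔDH = 0)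
    (gradHH traceADH : T)
    (hbiharmonic₁ : ΔDH + ∑ i, h (A H (e i)) (e i) = 0)
    (hbiharmonic₂ : (n : ℝ) • gradHH + (4 : ℝ) • traceADH = 0) :
    H = 0 := by
  have hz : ΔDH = 0 := hlap hparallel
  have hsum : ∑ i, h (A H (e i)) (e i) = 0 := by
    have := hbiharmonic₁; rw [hz, zero_add] at this; exact this
  have key : ∑ i, ⟪A H (e i), A H (e i)⟫ = (0 : ℝ) := by
    have : ⟪∑ i, h (A H (e i)) (e i), H⟫ = (0 : ℝ) := by
      rw [hsum, inner_zero_left]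
    rw [sum_inner] at this
    rw [← this]
    refine Finset.sum_congr rfl fun i _ => ?_
    rw [hsymm, hA H (e i) (A H (e i))]
  have hAze : ∀ i, A H (e i) = 0 := by
    have hnn : ∀ i ∈ Finset.univ, (0:ℝ) ≤ ⟪A H (e i), A H (e i)⟫ :=
      fun i _ => real_inner_self_nonneg
    intro i
    have := (Finset.sum_eq_zero_iff_of_nonneg hnn).mp key i (Finset.mem_univ i)
    exact inner_self_eq_zero.mp this
  have hHH : ⟪H, H⟫ = (0 : ℝ) := by
    nth_rewrite 2 [hH]
    rw [inner_smul_right, inner_sum]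
    have : ∀ i ∈ Finset.univ, ⟪H, h (e i) (e i)⟫ = (0:ℝ) := by
      intro i _
      rw [real_inner_comm, hA H (e i) (e i), hAze i, inner_zero_left]
    rw [Finset.sum_congr rfl this, Finset.sum_const, smul_zero, mul_zero]
  exact inner_self_eq_zero.mp hHH
end

section
/- The flat torus immersion φ(u,v) = a(cosh u, sinh u, cos v, sin v) into the Minkowski space E⁴₁ (with one time-like coordinate, a > 0) is a space-like surface with flat induced metric, has parallel mean curvature vector, and its mean curvature vector is light-like at every point (i.e., the surface is marginally trapped). -/
open Real

/-- The Minkowski inner product of index 1 on ℝ⁴ (the metric of E⁴₁). -/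
noncomputable def mink (x y : Fin 4 → ℝ) : ℝ :=
  -(x 0 * y 0) + x 1 * y 1 + x 2 * y 2 + x 3 * y 3

/-- The flat torus immersion φ(u,v) = a(cosh u, sinh u, cos v, sin v) into E⁴₁. -/
noncomputable def phi9 (a : ℝ) (p : ℝ × ℝ) : Fin 4 → ℝ :=
  ![a * Real.cosh p.1, a * Real.sinh p.1, a * Real.cos p.2, a * Real.sin p.2]

/-!
Write φ(u,v) = cosh u • e₀ + sinh u • e₁ + cos v • e₂ + sin v • e₃ with eᵢ = a·(standard basis
vector): a hyperbola in the time-like plane plus a circle in the space-like plane. Maps of this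
shape are closed under ∂_u and ∂_v. Hence φ_u = a(sinh u, cosh u, 0, 0) and φ_v = a(0, 0, -sin v, cos v)
are orthogonal of squared length a², while φ_uu = a(cosh u, sinh u, 0, 0) and
φ_vv = -a(0, 0, cos v, sin v) are normal and mutually orthogonal with squared lengths -a² and a², so
H = (φ_uu + φ_vv)/(2a²) is light-like. Since φ_uu + φ_vv merely reverses the circle part of φ,
H_u = φ_u/(2a²) and H_v = -φ_v/(2a²) are tangent: H is parallel.
-/

section HypCircMap

variable {E : Type*} [NormedAddCommGroup E] [NormedSpace ℝ E]

noncomputable def hypCircMap (e₀ e₁ e₂ e₃ : E) (q : ℝ × ℝ) : E :=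
  (cosh q.1 • e₀ + sinh q.1 • e₁) + (cos q.2 • e₂ + sin q.2 • e₃)

noncomputable def coordLaplacian (f : ℝ × ℝ → E) (q : ℝ × ℝ) : E :=
  fderiv ℝ (fun r => fderiv ℝ f r (1, 0)) q (1, 0) +
    fderiv ℝ (fun r => fderiv ℝ f r (0, 1)) q (0, 1)

variable (e₀ e₁ e₂ e₃ : E)

theorem fderiv_hypCircMap_apply (q w : ℝ × ℝ) :
    fderiv ℝ (hypCircMap e₀ e₁ e₂ e₃) q w =
      w.1 • hypCircMap e₁ e₀ 0 0 q + w.2 • hypCircMap 0 0 e₃ (-e₂) q := by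
  have hu : HasDerivAt (fun u => cosh u • e₀ + sinh u • e₁) (sinh q.1 • e₀ + cosh q.1 • e₁) q.1 :=
    ((hasDerivAt_cosh _).smul_const e₀).add ((hasDerivAt_sinh _).smul_const e₁)
  have hv : HasDerivAt (fun v => cos v • e₂ + sin v • e₃) (-sin q.2 • e₂ + cos q.2 • e₃) q.2 :=
    ((hasDerivAt_cos _).smul_const e₂).add ((hasDerivAt_sin _).smul_const e₃)
  have h : HasFDerivAt (hypCircMap e₀ e₁ e₂ e₃) _ q :=
    (hu.hasFDerivAt.comp q hasFDerivAt_fst).add (hv.hasFDerivAt.comp q hasFDerivAt_snd)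
  rw [h.fderiv]
  simp only [hypCircMap, add_apply, ContinuousLinearMap.comp_apply, ContinuousLinearMap.coe_fst',
    ContinuousLinearMap.coe_snd', ContinuousLinearMap.toSpanSingleton_apply, smul_add, smul_neg,
    neg_smul, smul_zero, add_zero, zero_add]
  module

theorem fderiv_hypCircMap_one_zero (q : ℝ × ℝ) :
    fderiv ℝ (hypCircMap e₀ e₁ e₂ e₃) q (1, 0) = hypCircMap e₁ e₀ 0 0 q := by
  simp [fderiv_hypCircMap_apply]

theorem fderiv_hypCircMap_zero_one (q : ℝ × ℝ) :
    fderiv ℝ (hypCircMap e₀ e₁ e₂ e₃) q (0, 1) = hypCircMap 0 0 e₃ (-e₂) q := by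
  simp [fderiv_hypCircMap_apply]

theorem smul_hypCircMap (c : ℝ) (q : ℝ × ℝ) :
    c • hypCircMap e₀ e₁ e₂ e₃ q = hypCircMap (c • e₀) (c • e₁) (c • e₂) (c • e₃) q := by
  simp only [hypCircMap, smul_add, smul_comm c]

theorem coordLaplacian_hypCircMap :
    coordLaplacian (hypCircMap e₀ e₁ e₂ e₃) = hypCircMap e₀ e₁ (-e₂) (-e₃) := by
  funext q
  simp only [coordLaplacian, fderiv_hypCircMap_one_zero, fderiv_hypCircMap_zero_one]
  simp only [hypCircMap, smul_zero, smul_neg]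
  abel

theorem fderiv_smul_coordLaplacian_hypCircMap_one_zero (c : ℝ) (q : ℝ × ℝ) :
    fderiv ℝ (fun r => c • coordLaplacian (hypCircMap e₀ e₁ e₂ e₃) r) q (1, 0) =
      c • fderiv ℝ (hypCircMap e₀ e₁ e₂ e₃) q (1, 0) := by
  simp only [coordLaplacian_hypCircMap, smul_hypCircMap, fderiv_hypCircMap_one_zero, smul_zero]

theorem fderiv_smul_coordLaplacian_hypCircMap_zero_one (c : ℝ) (q : ℝ × ℝ) :
    fderiv ℝ (fun r => c • coordLaplacian (hypCircMap e₀ e₁ e₂ e₃) r) q (0, 1) =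
      (-c) • fderiv ℝ (hypCircMap e₀ e₁ e₂ e₃) q (0, 1) := by
  rw [coordLaplacian_hypCircMap, fderiv_hypCircMap_zero_one, smul_hypCircMap]
  simp only [smul_hypCircMap, fderiv_hypCircMap_zero_one, smul_zero, smul_neg, neg_smul, neg_neg]

end HypCircMap

theorem mink_vecCons (x₀ x₁ x₂ x₃ y₀ y₁ y₂ y₃ : ℝ) :
    mink ![x₀, x₁, x₂, x₃] ![y₀, y₁, y₂, y₃] = -(x₀ * y₀) + x₁ * y₁ + x₂ * y₂ + x₃ * y₃ :=
  rfl

theorem mink_smul_add_smul_self (x y : Fin 4 → ℝ) (c d : ℝ) :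
    mink (c • x + d • y) (c • x + d • y) =
      c ^ 2 * mink x x + 2 * c * d * mink x y + d ^ 2 * mink y y := by
  simp only [mink, Pi.add_apply, Pi.smul_apply, smul_eq_mul]
  ring

theorem mink_smul_add_smul_self_pos {x y : Fin 4 → ℝ} {r : ℝ} (hr : 0 < r) (hxx : mink x x = r)
    (hxy : mink x y = 0) (hyy : mink y y = r) {c d : ℝ} (hcd : (c, d) ≠ (0, 0)) :
    0 < mink (c • x + d • y) (c • x + d • y) := by
  have hcd' : c ≠ 0 ∨ d ≠ 0 := by
    contrapose! hcd
    rw [hcd.1, hcd.2]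
  rw [mink_smul_add_smul_self, hxx, hxy, hyy, mul_zero, add_zero]
  rcases hcd' with hc | hd <;> positivity

theorem phi9_eq_hypCircMap (a : ℝ) :
    phi9 a = hypCircMap ![a, 0, 0, 0] ![0, a, 0, 0] ![0, 0, a, 0] ![0, 0, 0, a] := by
  funext q
  ext i
  fin_cases i <;> simp [phi9, hypCircMap, mul_comm]

theorem fderiv_phi9_one_zero (a : ℝ) (q : ℝ × ℝ) :
    fderiv ℝ (phi9 a) q (1, 0) = ![a * sinh q.1, a * cosh q.1, 0, 0] := by
  rw [phi9_eq_hypCircMap, fderiv_hypCircMap_one_zero]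
  ext i
  fin_cases i <;> simp [hypCircMap, mul_comm]

theorem fderiv_phi9_zero_one (a : ℝ) (q : ℝ × ℝ) :
    fderiv ℝ (phi9 a) q (0, 1) = ![0, 0, -(a * sin q.2), a * cos q.2] := by
  rw [phi9_eq_hypCircMap, fderiv_hypCircMap_zero_one]
  ext i
  fin_cases i <;> simp [hypCircMap, mul_comm]

theorem fderiv_fderiv_phi9_one_zero (a : ℝ) (q : ℝ × ℝ) :
    fderiv ℝ (fun r => fderiv ℝ (phi9 a) r (1, 0)) q (1, 0) = ![a * cosh q.1, a * sinh q.1, 0, 0] := by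
  simp only [phi9_eq_hypCircMap, fderiv_hypCircMap_one_zero]
  ext i
  fin_cases i <;> simp [hypCircMap, mul_comm]

theorem fderiv_fderiv_phi9_zero_one (a : ℝ) (q : ℝ × ℝ) :
    fderiv ℝ (fun r => fderiv ℝ (phi9 a) r (0, 1)) q (0, 1) =
      ![0, 0, -(a * cos q.2), -(a * sin q.2)] := by
  simp only [phi9_eq_hypCircMap, fderiv_hypCircMap_zero_one]
  ext i
  fin_cases i <;> simp [hypCircMap, mul_comm]

theorem stmt_9 (a : ℝ) (ha : 0 < a) (p : ℝ × ℝ) :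
    let φ := phi9 a
    let Xu := fderiv ℝ φ p (1, 0)
    let Xv := fderiv ℝ φ p (0, 1)
    let Xuu := fderiv ℝ (fun q => fderiv ℝ φ q (1, 0)) p (1, 0)
    let Xvv := fderiv ℝ (fun q => fderiv ℝ φ q (0, 1)) p (0, 1)
    let H := fun q : ℝ × ℝ => (1 / (2 * a ^ 2)) •
      (fderiv ℝ (fun r => fderiv ℝ φ r (1, 0)) q (1, 0) +
       fderiv ℝ (fun r => fderiv ℝ φ r (0, 1)) q (0, 1))
    -- induced metric a²(du² + dv²): flat and space-like
    (mink Xu Xu = a ^ 2 ∧ mink Xu Xv = 0 ∧ mink Xv Xv = a ^ 2) ∧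
    (∀ c d : ℝ, (c, d) ≠ ((0 : ℝ), (0 : ℝ)) →
      0 < mink (c • Xu + d • Xv) (c • Xu + d • Xv)) ∧
    -- φ_uu and φ_vv are normal, so H is the mean curvature vector
    (mink Xuu Xu = 0 ∧ mink Xuu Xv = 0 ∧ mink Xvv Xu = 0 ∧ mink Xvv Xv = 0) ∧
    H p = (1 / (2 * a ^ 2)) • (Xuu + Xvv) ∧
    -- marginally trapped: H is light-like and nonzero
    (mink (H p) (H p) = 0 ∧ H p ≠ 0) ∧
    -- parallel mean curvature vector: the derivatives of H are tangent
    ((∃ α β : ℝ, fderiv ℝ H p (1, 0) = α • Xu + β • Xv) ∧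
     (∃ α β : ℝ, fderiv ℝ H p (0, 1) = α • Xu + β • Xv)) := by
  intro φ Xu Xv Xuu Xvv H
  have hXu : Xu = ![a * sinh p.1, a * cosh p.1, 0, 0] := fderiv_phi9_one_zero a p
  have hXv : Xv = ![0, 0, -(a * sin p.2), a * cos p.2] := fderiv_phi9_zero_one a p
  have hXuu : Xuu = ![a * cosh p.1, a * sinh p.1, 0, 0] := fderiv_fderiv_phi9_one_zero a p
  have hXvv : Xvv = ![0, 0, -(a * cos p.2), -(a * sin p.2)] := fderiv_fderiv_phi9_zero_one a p
  have hHp : H p = (1 / (2 * a ^ 2)) • (Xuu + Xvv) := rfl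
  have hH : H = fun q => (1 / (2 * a ^ 2)) • coordLaplacian (phi9 a) q := rfl
  have hmetric : mink Xu Xu = a ^ 2 ∧ mink Xu Xv = 0 ∧ mink Xv Xv = a ^ 2 := by
    simp only [hXu, hXv, mink_vecCons]
    exact ⟨by linear_combination a ^ 2 * cosh_sq p.1, by ring,
      by linear_combination a ^ 2 * sin_sq_add_cos_sq p.2⟩
  refine ⟨hmetric, fun c d => mink_smul_add_smul_self_pos (by positivity) hmetric.1 hmetric.2.1
    hmetric.2.2, ?_, hHp, ⟨?_, ?_⟩, ⟨1 / (2 * a ^ 2), 0, ?_⟩, ⟨0, -(1 / (2 * a ^ 2)), ?_⟩⟩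
  · simp only [hXu, hXv, hXuu, hXvv, mink_vecCons]
    refine ⟨?_, ?_, ?_, ?_⟩ <;> ring
  · rw [hHp, smul_add, mink_smul_add_smul_self, hXuu, hXvv]
    simp only [mink_vecCons]
    linear_combination (a / (2 * a ^ 2)) ^ 2 * (sin_sq_add_cos_sq p.2 - cosh_sq p.1)
  · rw [hHp, hXuu, hXvv]
    refine smul_ne_zero (by positivity) fun h => ?_
    simpa [ha.ne', (cosh_pos p.1).ne'] using congrFun h 0
  · rw [hH, phi9_eq_hypCircMap, fderiv_smul_coordLaplacian_hypCircMap_one_zero, zero_smul, add_zero,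
      ← phi9_eq_hypCircMap]
  · rw [hH, phi9_eq_hypCircMap, fderiv_smul_coordLaplacian_hypCircMap_zero_one, zero_smul, zero_add,
      ← phi9_eq_hypCircMap]
end

section
/- Let M be a surface in pseudo-Euclidean space E^m_s given by φ = (f, ψ, f), where ψ: M → E^{m−2}_{s−1} is a minimal isometric immersion and f: M → R satisfies Δf = b for a nonzero real constant b. Then φ is an isometric immersion (the first and last coordinates being equal null directions), M is marginally trapped, and φ has parallel mean curvature vector. -/
open ContinuousLinearMap in
private lemma exists_clm {k : ℕ} (Bmid : EuclideanSpace ℝ (Fin k) → EuclideanSpace ℝ (Fin k) → ℝ)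
    (hBsymm : ∀ X Y, Bmid X Y = Bmid Y X)
    (hBlin : ∀ Y, IsLinearMap ℝ fun X => Bmid X Y) :
    ∃ B' : EuclideanSpace ℝ (Fin k) →L[ℝ] EuclideanSpace ℝ (Fin k) →L[ℝ] ℝ,
      ∀ x y, B' x y = Bmid x y := by
  let L : EuclideanSpace ℝ (Fin k) →ₗ[ℝ] EuclideanSpace ℝ (Fin k) →ₗ[ℝ] ℝ :=
    LinearMap.mk₂ ℝ Bmid
      (fun m₁ m₂ n => (hBlin n).map_add m₁ m₂)
      (fun cc m n => (hBlin n).map_smul cc m)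
      (fun m n₁ n₂ => by
        rw [hBsymm m (n₁ + n₂), hBsymm m n₁, hBsymm m n₂]; exact (hBlin m).map_add n₁ n₂)
      (fun cc m n => by
        rw [hBsymm m (cc • n), hBsymm m n]; exact (hBlin m).map_smul cc n)
  let L2 : EuclideanSpace ℝ (Fin k) →ₗ[ℝ] (EuclideanSpace ℝ (Fin k) →L[ℝ] ℝ) :=
    (LinearMap.toContinuousLinearMap.toLinearMap).comp L
  refine ⟨LinearMap.toContinuousLinearMap L2, fun x y => ?_⟩
  simp [L2, L]

private lemma dir_deriv {F : Type*} [NormedAddCommGroup F] [NormedSpace ℝ F]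
    {g : ℝ × ℝ → F} (hg : ContDiff ℝ (⊤ : ℕ∞) g) (X p : ℝ × ℝ) :
    HasFDerivAt (fun q => fderiv ℝ g q X) ((fderiv ℝ (fderiv ℝ g) p).flip X) p := by
  have h1 : HasFDerivAt (fderiv ℝ g) (fderiv ℝ (fderiv ℝ g) p) p :=
    (((hg.fderiv_right (m := 1) (WithTop.coe_le_coe.2 le_top)).differentiable one_ne_zero) p).hasFDerivAt
  have h2 := h1.clm_apply (hasFDerivAt_const X p)
  simpa using h2

private lemma hasFDeriv_bilin {k : ℕ}
    (B' : EuclideanSpace ℝ (Fin k) →L[ℝ] EuclideanSpace ℝ (Fin k) →L[ℝ] ℝ)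
    {u v : ℝ × ℝ → EuclideanSpace ℝ (Fin k)}
    {u' v' : ℝ × ℝ →L[ℝ] EuclideanSpace ℝ (Fin k)} {p : ℝ × ℝ}
    (hu : HasFDerivAt u u' p) (hv : HasFDerivAt v v' p) :
    HasFDerivAt (fun q => B' (u q) (v q))
      ((B' (u p)).comp v' + (B'.comp u').flip (v p)) p := by
  have h1 : HasFDerivAt (fun q => B' (u q)) (B'.comp u') p :=
    (B'.hasFDerivAt.comp p hu :)
  exact h1.clm_apply hv

private lemma solve2 (G11 G12 G22 x y : ℝ) (hDD : G11 * G22 - G12 ^ 2 ≠ 0)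
    (h1 : x * G11 + y * G12 = 0) (h2 : x * G12 + y * G22 = 0) : x = 0 ∧ y = 0 := by
  constructor
  · have hx : x * (G11 * G22 - G12 ^ 2) = 0 := by linear_combination G22 * h1 - G12 * h2
    rcases mul_eq_zero.1 hx with h | h
    · exact h
    · exact absurd h hDD
  · have hy : y * (G11 * G22 - G12 ^ 2) = 0 := by linear_combination G11 * h2 - G12 * h1
    rcases mul_eq_zero.1 hy with h | h
    · exact h
    · exact absurd h hDD

private lemma algebra_main (G11 G12 G22 F1 F2 F11 F12 F22
    q111 q121 q112 q122 q221 q222 a c H1 b : ℝ)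
    (hDD : G11 * G22 - G12 ^ 2 ≠ 0)
    (eqI : 2 * (G11 * G22 - G12 ^ 2) * H1
      = G22 * F11 - 2 * G12 * F12 + G11 * F22 - a * F1 - c * F2)
    (eqA1 : a * G11 + c * G12 = G22 * q111 - 2 * G12 * q121 + G11 * q221)
    (eqA2 : a * G12 + c * G22 = G22 * q112 - 2 * G12 * q122 + G11 * q222)
    (eqIV : 2 * (G11 * G22 - G12 ^ 2) *
        ((G22 * F11 + 2 * q122 * F1 - G12 * F12 - (q121 + q112) * F2)
          + (G11 * F22 + 2 * q121 * F2 - G12 * F12 - (q221 + q122) * F1))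
      - ((G22 * F1 - G12 * F2) * (2 * q111 * G22 + 2 * G11 * q122 - 2 * G12 * (q121 + q112))
          + (G11 * F2 - G12 * F1) * (2 * q121 * G22 + 2 * G11 * q222 - 2 * G12 * (q221 + q122)))
      = 2 * (G11 * G22 - G12 ^ 2) ^ 2 * b) :
    H1 = b / 2 := by
  have h0 : 2 * (G11 * G22 - G12 ^ 2) ^ 2 * (H1 - b / 2) = 0 := by
    linear_combination (G11 * G22 - G12 ^ 2) * eqI - (F1 * G22 - F2 * G12) * eqA1
      - (F2 * G11 - F1 * G12) * eqA2 + (1 / 2) * eqIV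
  have h2 : (2 : ℝ) * (G11 * G22 - G12 ^ 2) ^ 2 ≠ 0 :=
    mul_ne_zero two_ne_zero (pow_ne_zero 2 hDD)
  rcases mul_eq_zero.1 h0 with h | h
  · exact absurd h h2
  · linarith


private lemma sqrt_elim (DD n1 n2 N1 N2 d1 d2 b : ℝ) (hDD : 0 < DD)
    (h : 1 / Real.sqrt DD *
        (N1 * (-(Real.sqrt DD ^ 2)⁻¹ * (1 / (2 * Real.sqrt DD) * d1)) + (Real.sqrt DD)⁻¹ * n1
          + (N2 * (-(Real.sqrt DD ^ 2)⁻¹ * (1 / (2 * Real.sqrt DD) * d2)) + (Real.sqrt DD)⁻¹ * n2))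
        = b) :
    2 * DD * (n1 + n2) - (N1 * d1 + N2 * d2) = 2 * DD ^ 2 * b := by
  have hs : 0 < Real.sqrt DD := Real.sqrt_pos.2 hDD
  have hsne : Real.sqrt DD ≠ 0 := ne_of_gt hs
  have hs2 : Real.sqrt DD ^ 2 = DD := Real.sq_sqrt hDD.le
  have hDDne : DD ≠ 0 := ne_of_gt hDD
  have h2 : Real.sqrt DD * (2 * DD * (n1 + n2) - (N1 * d1 + N2 * d2))
      = Real.sqrt DD * (2 * DD ^ 2 * b) := by
    field_simp at h
    linear_combination Real.sqrt DD * h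
      - (Real.sqrt DD * (2 * (n1 + n2) - 2 * b * (DD + Real.sqrt DD ^ 2))) * hs2
  have := mul_left_cancel₀ hsne h2
  linarith [this]

set_option maxHeartbeats 2000000 in
theorem stmt_10 {k : ℕ}
    (Bmid : EuclideanSpace ℝ (Fin k) → EuclideanSpace ℝ (Fin k) → ℝ)
    (hBsymm : ∀ X Y, Bmid X Y = Bmid Y X)
    (hBlin : ∀ Y, IsLinearMap ℝ (fun X => Bmid X Y))
    (hBnondeg : ∀ X, (∀ Y, Bmid X Y = 0) → X = 0)
    (ψ : ℝ × ℝ → EuclideanSpace ℝ (Fin k)) (hψ : ContDiff ℝ (⊤ : ℕ∞) ψ)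
    (f : ℝ × ℝ → ℝ) (hf : ContDiff ℝ (⊤ : ℕ∞) f)
    (bconst : ℝ) (hb : bconst ≠ 0)
    -- induced metric of ψ (space-like)
    (g11 g12 g22 : ℝ × ℝ → ℝ)
    (hg11 : ∀ p, g11 p = Bmid (fderiv ℝ ψ p (1, 0)) (fderiv ℝ ψ p (1, 0)))
    (hg12 : ∀ p, g12 p = Bmid (fderiv ℝ ψ p (1, 0)) (fderiv ℝ ψ p (0, 1)))
    (hg22 : ∀ p, g22 p = Bmid (fderiv ℝ ψ p (0, 1)) (fderiv ℝ ψ p (0, 1)))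
    (hpos : ∀ p, 0 < g11 p ∧ 0 < g11 p * g22 p - g12 p ^ 2)
    -- ψ is minimal: the g-trace of its second derivatives is tangent
    (hmin : ∀ p, ∃ a c : ℝ,
      g22 p • fderiv ℝ (fun q => fderiv ℝ ψ q (1, 0)) p (1, 0)
      - (2 * g12 p) • fderiv ℝ (fun q => fderiv ℝ ψ q (1, 0)) p (0, 1)
      + g11 p • fderiv ℝ (fun q => fderiv ℝ ψ q (0, 1)) p (0, 1)
      = a • fderiv ℝ ψ p (1, 0) + c • fderiv ℝ ψ p (0, 1))
    -- Δf = bconst (Laplace–Beltrami of the induced metric, in coordinates)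
    (hΔf : ∀ p,
      (1 / Real.sqrt (g11 p * g22 p - g12 p ^ 2)) *
        (fderiv ℝ (fun q => (g22 q * fderiv ℝ f q (1, 0) - g12 q * fderiv ℝ f q (0, 1)) /
            Real.sqrt (g11 q * g22 q - g12 q ^ 2)) p (1, 0)
         + fderiv ℝ (fun q => (g11 q * fderiv ℝ f q (0, 1) - g12 q * fderiv ℝ f q (1, 0)) /
            Real.sqrt (g11 q * g22 q - g12 q ^ 2)) p (0, 1)) = bconst)
    -- the immersion φ = (f, ψ, f) and the ambient metric B
    (φ : ℝ × ℝ → ℝ × EuclideanSpace ℝ (Fin k) × ℝ)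
    (hφ : φ = fun p => (f p, ψ p, f p))
    (B : (ℝ × EuclideanSpace ℝ (Fin k) × ℝ) → (ℝ × EuclideanSpace ℝ (Fin k) × ℝ) → ℝ)
    (hB : ∀ v w, B v w = -(v.1 * w.1) + Bmid v.2.1 w.2.1 + v.2.2 * w.2.2)
    -- H is the mean curvature vector of φ: normal, with 2(det g) H = g-trace of φ'' mod tangent
    (H : ℝ × ℝ → ℝ × EuclideanSpace ℝ (Fin k) × ℝ)
    (hHnormal : ∀ p, B (H p) (fderiv ℝ φ p (1, 0)) = 0 ∧ B (H p) (fderiv ℝ φ p (0, 1)) = 0)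
    (hHtrace : ∀ p, ∃ a c : ℝ,
      g22 p • fderiv ℝ (fun q => fderiv ℝ φ q (1, 0)) p (1, 0)
      - (2 * g12 p) • fderiv ℝ (fun q => fderiv ℝ φ q (1, 0)) p (0, 1)
      + g11 p • fderiv ℝ (fun q => fderiv ℝ φ q (0, 1)) p (0, 1)
      = (2 * (g11 p * g22 p - g12 p ^ 2)) • H p
        + a • fderiv ℝ φ p (1, 0) + c • fderiv ℝ φ p (0, 1)) :
    -- conclusions: φ is isometric; H = (b/2)(1,0,1); M is marginally trapped; DH = 0
    (∀ p X Y, B (fderiv ℝ φ p X) (fderiv ℝ φ p Y) = Bmid (fderiv ℝ ψ p X) (fderiv ℝ ψ p Y)) ∧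
    (∀ p, H p = (bconst / 2) • ((1 : ℝ), (0 : EuclideanSpace ℝ (Fin k)), (1 : ℝ))) ∧
    (∀ p, B (H p) (H p) = 0 ∧ H p ≠ 0) ∧
    (∀ p X, ∃ a c : ℝ, fderiv ℝ H p X = a • fderiv ℝ φ p (1, 0) + c • fderiv ℝ φ p (0, 1)) := by
  obtain ⟨B', hB'⟩ := exists_clm Bmid hBsymm hBlin
  have hfd : Differentiable ℝ f := hf.differentiable (by simp)
  have hψd : Differentiable ℝ ψ := hψ.differentiable (by simp)
  have hdφat : ∀ q, HasFDerivAt φ ((fderiv ℝ f q).prod ((fderiv ℝ ψ q).prod (fderiv ℝ f q))) q := by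
    intro q
    rw [hφ]
    exact HasFDerivAt.prodMk (hfd q).hasFDerivAt (HasFDerivAt.prodMk (hψd q).hasFDerivAt (hfd q).hasFDerivAt)
  have hdφ' : ∀ q X, fderiv ℝ φ q X = (fderiv ℝ f q X, fderiv ℝ ψ q X, fderiv ℝ f q X) := by
    intro q X
    rw [(hdφat q).fderiv]
    rfl
  have concl1 : ∀ p X Y,
      B (fderiv ℝ φ p X) (fderiv ℝ φ p Y) = Bmid (fderiv ℝ ψ p X) (fderiv ℝ ψ p Y) := by
    intro p X Y
    rw [hdφ' p X, hdφ' p Y, hB]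
    simp
  have key : ∀ p, H p = (bconst / 2) • ((1 : ℝ), (0 : EuclideanSpace ℝ (Fin k)), (1 : ℝ)) := by
    intro p
    obtain ⟨hg11pos, hDD⟩ := hpos p
    have DDne : g11 p * g22 p - g12 p ^ 2 ≠ 0 := ne_of_gt hDD
    have h2DDne : (2 : ℝ) * (g11 p * g22 p - g12 p ^ 2) ≠ 0 := mul_ne_zero two_ne_zero DDne
    have hsymψ : ∀ X Y, fderiv ℝ (fderiv ℝ ψ) p X Y = fderiv ℝ (fderiv ℝ ψ) p Y X :=
      fun X Y => (hψ.contDiffAt.isSymmSndFDerivAt (by rw [minSmoothness_of_isRCLikeNormedField]; exact WithTop.coe_le_coe.2 le_top)) X Y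
    have hsymf : ∀ X Y, fderiv ℝ (fderiv ℝ f) p X Y = fderiv ℝ (fderiv ℝ f) p Y X :=
      fun X Y => (hf.contDiffAt.isSymmSndFDerivAt (by rw [minSmoothness_of_isRCLikeNormedField]; exact WithTop.coe_le_coe.2 le_top)) X Y
    have hsψ : fderiv ℝ (fderiv ℝ ψ) p ((0:ℝ), (1:ℝ)) ((1:ℝ), (0:ℝ))
        = fderiv ℝ (fderiv ℝ ψ) p (1, 0) (0, 1) := hsymψ _ _
    have hsf : fderiv ℝ (fderiv ℝ f) p ((0:ℝ), (1:ℝ)) ((1:ℝ), (0:ℝ))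
        = fderiv ℝ (fderiv ℝ f) p (1, 0) (0, 1) := hsymf _ _
    have hdirψ : ∀ X Y : ℝ × ℝ, fderiv ℝ (fun q => fderiv ℝ ψ q X) p Y
        = fderiv ℝ (fderiv ℝ ψ) p Y X := by
      intro X Y; rw [(dir_deriv hψ X p).fderiv]; simp
    have hdirf : ∀ X Y : ℝ × ℝ, fderiv ℝ (fun q => fderiv ℝ f q X) p Y
        = fderiv ℝ (fderiv ℝ f) p Y X := by
      intro X Y; rw [(dir_deriv hf X p).fderiv]; simp
    have hddφ : ∀ X Y : ℝ × ℝ, fderiv ℝ (fun q => fderiv ℝ φ q X) p Y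
        = (fderiv ℝ (fderiv ℝ f) p Y X, fderiv ℝ (fderiv ℝ ψ) p Y X,
            fderiv ℝ (fderiv ℝ f) p Y X) := by
      intro X Y
      have e : (fun q => fderiv ℝ φ q X)
          = fun q => (fderiv ℝ f q X, fderiv ℝ ψ q X, fderiv ℝ f q X) :=
        funext fun q => hdφ' q X
      rw [e, (HasFDerivAt.prodMk (dir_deriv hf X p) (HasFDerivAt.prodMk (dir_deriv hψ X p) (dir_deriv hf X p))).fderiv]
      simp
    -- Bmid linearity helpers
    have hBadd : ∀ u v w, Bmid (u + v) w = Bmid u w + Bmid v w :=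
      fun u v w => (hBlin w).map_add u v
    have hBsub : ∀ u v w, Bmid (u - v) w = Bmid u w - Bmid v w := by
      intro u v w
      have h1 := (hBlin w).map_add (u - v) v
      simp at h1
      linarith [h1]
    have hBsmul : ∀ (r : ℝ) u w, Bmid (r • u) w = r * Bmid u w := by
      intro r u w
      have := (hBlin w).map_smul r u
      simpa using this
    -- trace equation components
    obtain ⟨a, c, htr⟩ := hHtrace p
    simp only [hddφ] at htr
    simp only [hdφ'] at htr
    rw [hsψ, hsf] at htr
    have E1 := congrArg Prod.fst htr
    have Em := congrArg (fun v => v.2.1) htr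
    have E3 := congrArg (fun v => v.2.2) htr
    simp only [Prod.fst_add, Prod.fst_sub, Prod.smul_fst, Prod.snd_add, Prod.snd_sub,
      Prod.smul_snd, smul_eq_mul] at E1 E3
    simp only [Prod.fst_add, Prod.fst_sub, Prod.smul_fst, Prod.snd_add, Prod.snd_sub,
      Prod.smul_snd] at Em
    -- H₁ = H₃
    have hH13 : (H p).1 = (H p).2.2 := by
      apply mul_left_cancel₀ h2DDne
      linarith [E1, E3]
    -- normality in components
    obtain ⟨hn1, hn2⟩ := hHnormal p
    rw [hdφ' p (1, 0), hB] at hn1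
    rw [hdφ' p (0, 1), hB] at hn2
    simp only [] at hn1 hn2
    rw [← hH13] at hn1 hn2
    have hBm1 : Bmid (H p).2.1 (fderiv ℝ ψ p (1, 0)) = 0 := by linarith [hn1]
    have hBm2 : Bmid (H p).2.1 (fderiv ℝ ψ p (0, 1)) = 0 := by linarith [hn2]
    -- minimality
    obtain ⟨a0, c0, hm⟩ := hmin p
    simp only [hdirψ] at hm
    rw [hsψ] at hm
    -- middle component: 2D•Hm + a•P1 + c•P2 = a0•P1 + c0•P2
    have hmid2 : (2 * (g11 p * g22 p - g12 p ^ 2)) • (H p).2.1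
        + a • fderiv ℝ ψ p (1, 0) + c • fderiv ℝ ψ p (0, 1)
        = a0 • fderiv ℝ ψ p (1, 0) + c0 • fderiv ℝ ψ p (0, 1) := Em.symm.trans hm
    -- metric values
    have hg21v : Bmid (fderiv ℝ ψ p (0, 1)) (fderiv ℝ ψ p (1, 0)) = g12 p := by
      rw [hBsymm]; exact (hg12 p).symm
    have hg12v : Bmid (fderiv ℝ ψ p (1, 0)) (fderiv ℝ ψ p (0, 1)) = g12 p := (hg12 p).symm
    have hg11v : Bmid (fderiv ℝ ψ p (1, 0)) (fderiv ℝ ψ p (1, 0)) = g11 p := (hg11 p).symm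
    have hg22v : Bmid (fderiv ℝ ψ p (0, 1)) (fderiv ℝ ψ p (0, 1)) = g22 p := (hg22 p).symm
    -- scalarize hmid2 against P1 and P2
    have hmids1 := congrArg (fun v => Bmid v (fderiv ℝ ψ p (1, 0))) hmid2
    have hmids2 := congrArg (fun v => Bmid v (fderiv ℝ ψ p (0, 1))) hmid2
    simp only [hBadd, hBsub, hBsmul, hBm1, hBm2, hg11v, hg12v, hg21v, hg22v, mul_zero] at hmids1 hmids2
    -- solve: a0 = a, c0 = c
    obtain ⟨ha0, hc0⟩ := solve2 (g11 p) (g12 p) (g22 p) (a0 - a) (c0 - c) DDne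
      (by linarith [hmids1]) (by linarith [hmids2])
    have ha0' : a0 = a := by linarith
    have hc0' : c0 = c := by linarith
    rw [ha0', hc0'] at hmid2 hm
    -- Hm = 0
    have hHm : (H p).2.1 = 0 := by
      have h1 : (2 * (g11 p * g22 p - g12 p ^ 2)) • (H p).2.1
          + a • fderiv ℝ ψ p (1, 0) + c • fderiv ℝ ψ p (0, 1)
          = 0 + a • fderiv ℝ ψ p (1, 0) + c • fderiv ℝ ψ p (0, 1) := by
        rw [hmid2]; abel
      have h2 : (2 * (g11 p * g22 p - g12 p ^ 2)) • (H p).2.1 = 0 := by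
        have := add_right_cancel (add_right_cancel h1)
        simpa using this
      rcases smul_eq_zero.1 h2 with h | h
      · exact absurd h h2DDne
      · exact h
    -- eqA1, eqA2 from minimality
    have hmA1 := congrArg (fun v => Bmid v (fderiv ℝ ψ p (1, 0))) hm
    have hmA2 := congrArg (fun v => Bmid v (fderiv ℝ ψ p (0, 1))) hm
    simp only [hBadd, hBsub, hBsmul, hg11v, hg12v, hg21v, hg22v] at hmA1 hmA2
    -- metric coefficient derivative objects
    have hg11f : g11 = fun q => B' (fderiv ℝ ψ q (1, 0)) (fderiv ℝ ψ q (1, 0)) :=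
      funext fun q => by rw [hg11 q, hB']
    have hg12f : g12 = fun q => B' (fderiv ℝ ψ q (1, 0)) (fderiv ℝ ψ q (0, 1)) :=
      funext fun q => by rw [hg12 q, hB']
    have hg22f : g22 = fun q => B' (fderiv ℝ ψ q (0, 1)) (fderiv ℝ ψ q (0, 1)) :=
      funext fun q => by rw [hg22 q, hB']
    obtain ⟨D11, hD11, hD11a, hD11b⟩ :
        ∃ L : (ℝ × ℝ) →L[ℝ] ℝ, HasFDerivAt g11 L p
          ∧ L (1, 0) = 2 * Bmid (fderiv ℝ (fderiv ℝ ψ) p (1, 0) (1, 0)) (fderiv ℝ ψ p (1, 0))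
          ∧ L (0, 1) = 2 * Bmid (fderiv ℝ (fderiv ℝ ψ) p (1, 0) (0, 1)) (fderiv ℝ ψ p (1, 0)) := by
      refine ⟨_, by rw [hg11f]; exact
        hasFDeriv_bilin B' (dir_deriv hψ (1, 0) p) (dir_deriv hψ (1, 0) p), ?_, ?_⟩
      · simp [hB', hBsymm (fderiv ℝ ψ p (1, 0))]; ring
      · simp [hB', hsψ, hBsymm (fderiv ℝ ψ p (1, 0))]; ring
    obtain ⟨D12, hD12, hD12a, hD12b⟩ :
        ∃ L : (ℝ × ℝ) →L[ℝ] ℝ, HasFDerivAt g12 L p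
          ∧ L (1, 0) = Bmid (fderiv ℝ (fderiv ℝ ψ) p (1, 0) (0, 1)) (fderiv ℝ ψ p (1, 0))
              + Bmid (fderiv ℝ (fderiv ℝ ψ) p (1, 0) (1, 0)) (fderiv ℝ ψ p (0, 1))
          ∧ L (0, 1) = Bmid (fderiv ℝ (fderiv ℝ ψ) p (0, 1) (0, 1)) (fderiv ℝ ψ p (1, 0))
              + Bmid (fderiv ℝ (fderiv ℝ ψ) p (1, 0) (0, 1)) (fderiv ℝ ψ p (0, 1)) := by
      refine ⟨_, by rw [hg12f]; exact
        hasFDeriv_bilin B' (dir_deriv hψ (1, 0) p) (dir_deriv hψ (0, 1) p), ?_, ?_⟩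
      · simp [hB', hBsymm (fderiv ℝ ψ p (1, 0))]
      · simp [hB', hsψ, hBsymm (fderiv ℝ ψ p (1, 0))]
    obtain ⟨D22, hD22, hD22a, hD22b⟩ :
        ∃ L : (ℝ × ℝ) →L[ℝ] ℝ, HasFDerivAt g22 L p
          ∧ L (1, 0) = 2 * Bmid (fderiv ℝ (fderiv ℝ ψ) p (1, 0) (0, 1)) (fderiv ℝ ψ p (0, 1))
          ∧ L (0, 1) = 2 * Bmid (fderiv ℝ (fderiv ℝ ψ) p (0, 1) (0, 1)) (fderiv ℝ ψ p (0, 1)) := by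
      refine ⟨_, by rw [hg22f]; exact
        hasFDeriv_bilin B' (dir_deriv hψ (0, 1) p) (dir_deriv hψ (0, 1) p), ?_, ?_⟩
      · simp [hB', hsψ, hBsymm (fderiv ℝ ψ p (0, 1))]; ring
      · simp [hB', hBsymm (fderiv ℝ ψ p (0, 1))]; ring
    obtain ⟨Lf1, hLf1, hLf1a, hLf1b⟩ :
        ∃ L : (ℝ × ℝ) →L[ℝ] ℝ, HasFDerivAt (fun q => fderiv ℝ f q (1, 0)) L p
          ∧ L (1, 0) = fderiv ℝ (fderiv ℝ f) p (1, 0) (1, 0)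
          ∧ L (0, 1) = fderiv ℝ (fderiv ℝ f) p (1, 0) (0, 1) := by
      refine ⟨_, dir_deriv hf (1, 0) p, ?_, ?_⟩
      · simp
      · simp [hsf]
    obtain ⟨Lf2, hLf2, hLf2a, hLf2b⟩ :
        ∃ L : (ℝ × ℝ) →L[ℝ] ℝ, HasFDerivAt (fun q => fderiv ℝ f q (0, 1)) L p
          ∧ L (1, 0) = fderiv ℝ (fderiv ℝ f) p (1, 0) (0, 1)
          ∧ L (0, 1) = fderiv ℝ (fderiv ℝ f) p (0, 1) (0, 1) := by
      refine ⟨_, dir_deriv hf (0, 1) p, ?_, ?_⟩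
      · simp
      · simp
    obtain ⟨LD, hLD, hLDa, hLDb⟩ :
        ∃ L : (ℝ × ℝ) →L[ℝ] ℝ, HasFDerivAt (fun q => g11 q * g22 q - g12 q ^ 2) L p
          ∧ L (1, 0) = 2 * Bmid (fderiv ℝ (fderiv ℝ ψ) p (1, 0) (1, 0)) (fderiv ℝ ψ p (1, 0)) * g22 p
              + 2 * g11 p * Bmid (fderiv ℝ (fderiv ℝ ψ) p (1, 0) (0, 1)) (fderiv ℝ ψ p (0, 1))
              - 2 * g12 p * (Bmid (fderiv ℝ (fderiv ℝ ψ) p (1, 0) (0, 1)) (fderiv ℝ ψ p (1, 0))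
                + Bmid (fderiv ℝ (fderiv ℝ ψ) p (1, 0) (1, 0)) (fderiv ℝ ψ p (0, 1)))
          ∧ L (0, 1) = 2 * Bmid (fderiv ℝ (fderiv ℝ ψ) p (1, 0) (0, 1)) (fderiv ℝ ψ p (1, 0)) * g22 p
              + 2 * g11 p * Bmid (fderiv ℝ (fderiv ℝ ψ) p (0, 1) (0, 1)) (fderiv ℝ ψ p (0, 1))
              - 2 * g12 p * (Bmid (fderiv ℝ (fderiv ℝ ψ) p (0, 1) (0, 1)) (fderiv ℝ ψ p (1, 0))
                + Bmid (fderiv ℝ (fderiv ℝ ψ) p (1, 0) (0, 1)) (fderiv ℝ ψ p (0, 1))) := by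
      have hsq : HasFDerivAt (fun q => g12 q ^ 2) (g12 p • D12 + g12 p • D12) p := by
        have h := hD12.mul hD12
        simp only [pow_two]; exact h
      refine ⟨_, (hD11.mul hD22).sub hsq, ?_, ?_⟩
      · simp [hD11a, hD11b, hD22a, hD22b, hD12a, hD12b]; ring
      · simp [hD11a, hD11b, hD22a, hD22b, hD12a, hD12b]; ring
    obtain ⟨LN1, hN1, hN1a⟩ :
        ∃ L : (ℝ × ℝ) →L[ℝ] ℝ,
          HasFDerivAt (fun q => g22 q * fderiv ℝ f q (1, 0) - g12 q * fderiv ℝ f q (0, 1)) L p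
          ∧ L (1, 0) = g22 p * fderiv ℝ (fderiv ℝ f) p (1, 0) (1, 0)
              + 2 * Bmid (fderiv ℝ (fderiv ℝ ψ) p (1, 0) (0, 1)) (fderiv ℝ ψ p (0, 1)) * fderiv ℝ f p (1, 0)
              - g12 p * fderiv ℝ (fderiv ℝ f) p (1, 0) (0, 1)
              - (Bmid (fderiv ℝ (fderiv ℝ ψ) p (1, 0) (0, 1)) (fderiv ℝ ψ p (1, 0))
                + Bmid (fderiv ℝ (fderiv ℝ ψ) p (1, 0) (1, 0)) (fderiv ℝ ψ p (0, 1))) * fderiv ℝ f p (0, 1) := by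
      refine ⟨_, (hD22.mul hLf1).sub (hD12.mul hLf2), ?_⟩
      simp [hD22a, hD12a, hLf1a, hLf2a]; ring
    obtain ⟨LN2, hN2, hN2b⟩ :
        ∃ L : (ℝ × ℝ) →L[ℝ] ℝ,
          HasFDerivAt (fun q => g11 q * fderiv ℝ f q (0, 1) - g12 q * fderiv ℝ f q (1, 0)) L p
          ∧ L (0, 1) = g11 p * fderiv ℝ (fderiv ℝ f) p (0, 1) (0, 1)
              + 2 * Bmid (fderiv ℝ (fderiv ℝ ψ) p (1, 0) (0, 1)) (fderiv ℝ ψ p (1, 0)) * fderiv ℝ f p (0, 1)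
              - g12 p * fderiv ℝ (fderiv ℝ f) p (1, 0) (0, 1)
              - (Bmid (fderiv ℝ (fderiv ℝ ψ) p (0, 1) (0, 1)) (fderiv ℝ ψ p (1, 0))
                + Bmid (fderiv ℝ (fderiv ℝ ψ) p (1, 0) (0, 1)) (fderiv ℝ ψ p (0, 1))) * fderiv ℝ f p (1, 0) := by
      refine ⟨_, (hD11.mul hLf2).sub (hD12.mul hLf1), ?_⟩
      simp [hD11b, hD12b, hLf1b, hLf2b]; ring
    -- sqrt and quotient derivatives
    have hSpos : 0 < Real.sqrt (g11 p * g22 p - g12 p ^ 2) := Real.sqrt_pos.2 hDD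
    have hSne : Real.sqrt (g11 p * g22 p - g12 p ^ 2) ≠ 0 := ne_of_gt hSpos
    have hS2 : Real.sqrt (g11 p * g22 p - g12 p ^ 2) ^ 2 = g11 p * g22 p - g12 p ^ 2 :=
      Real.sq_sqrt hDD.le
    have hS : HasFDerivAt (fun q => Real.sqrt (g11 q * g22 q - g12 q ^ 2))
        ((1 / (2 * Real.sqrt (g11 p * g22 p - g12 p ^ 2))) • LD) p := hLD.sqrt DDne
    have hSinv : HasFDerivAt (fun q => (Real.sqrt (g11 q * g22 q - g12 q ^ 2))⁻¹)
        ((-(Real.sqrt (g11 p * g22 p - g12 p ^ 2) ^ 2)⁻¹) •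
          ((1 / (2 * Real.sqrt (g11 p * g22 p - g12 p ^ 2))) • LD)) p :=
      (hasDerivAt_inv hSne).comp_hasFDerivAt p hS
    have hQ1 : HasFDerivAt (fun q =>
        (g22 q * fderiv ℝ f q (1, 0) - g12 q * fderiv ℝ f q (0, 1)) /
          Real.sqrt (g11 q * g22 q - g12 q ^ 2))
        ((g22 p * fderiv ℝ f p (1, 0) - g12 p * fderiv ℝ f p (0, 1)) •
            ((-(Real.sqrt (g11 p * g22 p - g12 p ^ 2) ^ 2)⁻¹) •
              ((1 / (2 * Real.sqrt (g11 p * g22 p - g12 p ^ 2))) • LD))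
          + (Real.sqrt (g11 p * g22 p - g12 p ^ 2))⁻¹ • LN1) p := by
      simp only [div_eq_mul_inv]
      exact hN1.mul hSinv
    have hQ2 : HasFDerivAt (fun q =>
        (g11 q * fderiv ℝ f q (0, 1) - g12 q * fderiv ℝ f q (1, 0)) /
          Real.sqrt (g11 q * g22 q - g12 q ^ 2))
        ((g11 p * fderiv ℝ f p (0, 1) - g12 p * fderiv ℝ f p (1, 0)) •
            ((-(Real.sqrt (g11 p * g22 p - g12 p ^ 2) ^ 2)⁻¹) •
              ((1 / (2 * Real.sqrt (g11 p * g22 p - g12 p ^ 2))) • LD))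
          + (Real.sqrt (g11 p * g22 p - g12 p ^ 2))⁻¹ • LN2) p := by
      simp only [div_eq_mul_inv]
      exact hN2.mul hSinv
    have hE := hΔf p
    rw [hQ1.fderiv, hQ2.fderiv] at hE
    simp only [ContinuousLinearMap.add_apply, ContinuousLinearMap.coe_smul', Pi.smul_apply,
      smul_eq_mul, hN1a, hN2b, hLDa, hLDb] at hE
    have eqIV := sqrt_elim (g11 p * g22 p - g12 p ^ 2)
      (g22 p * fderiv ℝ (fderiv ℝ f) p (1, 0) (1, 0)
        + 2 * Bmid (fderiv ℝ (fderiv ℝ ψ) p (1, 0) (0, 1)) (fderiv ℝ ψ p (0, 1)) * fderiv ℝ f p (1, 0)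
        - g12 p * fderiv ℝ (fderiv ℝ f) p (1, 0) (0, 1)
        - (Bmid (fderiv ℝ (fderiv ℝ ψ) p (1, 0) (0, 1)) (fderiv ℝ ψ p (1, 0))
          + Bmid (fderiv ℝ (fderiv ℝ ψ) p (1, 0) (1, 0)) (fderiv ℝ ψ p (0, 1))) * fderiv ℝ f p (0, 1))
      (g11 p * fderiv ℝ (fderiv ℝ f) p (0, 1) (0, 1)
        + 2 * Bmid (fderiv ℝ (fderiv ℝ ψ) p (1, 0) (0, 1)) (fderiv ℝ ψ p (1, 0)) * fderiv ℝ f p (0, 1)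
        - g12 p * fderiv ℝ (fderiv ℝ f) p (1, 0) (0, 1)
        - (Bmid (fderiv ℝ (fderiv ℝ ψ) p (0, 1) (0, 1)) (fderiv ℝ ψ p (1, 0))
          + Bmid (fderiv ℝ (fderiv ℝ ψ) p (1, 0) (0, 1)) (fderiv ℝ ψ p (0, 1))) * fderiv ℝ f p (1, 0))
      (g22 p * fderiv ℝ f p (1, 0) - g12 p * fderiv ℝ f p (0, 1))
      (g11 p * fderiv ℝ f p (0, 1) - g12 p * fderiv ℝ f p (1, 0))
      (2 * Bmid (fderiv ℝ (fderiv ℝ ψ) p (1, 0) (1, 0)) (fderiv ℝ ψ p (1, 0)) * g22 p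
        + 2 * g11 p * Bmid (fderiv ℝ (fderiv ℝ ψ) p (1, 0) (0, 1)) (fderiv ℝ ψ p (0, 1))
        - 2 * g12 p * (Bmid (fderiv ℝ (fderiv ℝ ψ) p (1, 0) (0, 1)) (fderiv ℝ ψ p (1, 0))
          + Bmid (fderiv ℝ (fderiv ℝ ψ) p (1, 0) (1, 0)) (fderiv ℝ ψ p (0, 1))))
      (2 * Bmid (fderiv ℝ (fderiv ℝ ψ) p (1, 0) (0, 1)) (fderiv ℝ ψ p (1, 0)) * g22 p
        + 2 * g11 p * Bmid (fderiv ℝ (fderiv ℝ ψ) p (0, 1) (0, 1)) (fderiv ℝ ψ p (0, 1))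
        - 2 * g12 p * (Bmid (fderiv ℝ (fderiv ℝ ψ) p (0, 1) (0, 1)) (fderiv ℝ ψ p (1, 0))
          + Bmid (fderiv ℝ (fderiv ℝ ψ) p (1, 0) (0, 1)) (fderiv ℝ ψ p (0, 1))))
      bconst hDD hE
    have eqI : 2 * (g11 p * g22 p - g12 p ^ 2) * (H p).1
        = g22 p * fderiv ℝ (fderiv ℝ f) p (1, 0) (1, 0)
          - 2 * g12 p * fderiv ℝ (fderiv ℝ f) p (1, 0) (0, 1)
          + g11 p * fderiv ℝ (fderiv ℝ f) p (0, 1) (0, 1)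
          - a * fderiv ℝ f p (1, 0) - c * fderiv ℝ f p (0, 1) := by linarith [E1]
    have eqA1 : a * g11 p + c * g12 p
        = g22 p * Bmid (fderiv ℝ (fderiv ℝ ψ) p (1, 0) (1, 0)) (fderiv ℝ ψ p (1, 0))
          - 2 * g12 p * Bmid (fderiv ℝ (fderiv ℝ ψ) p (1, 0) (0, 1)) (fderiv ℝ ψ p (1, 0))
          + g11 p * Bmid (fderiv ℝ (fderiv ℝ ψ) p (0, 1) (0, 1)) (fderiv ℝ ψ p (1, 0)) := by
      linarith [hmA1]
    have eqA2 : a * g12 p + c * g22 p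
        = g22 p * Bmid (fderiv ℝ (fderiv ℝ ψ) p (1, 0) (1, 0)) (fderiv ℝ ψ p (0, 1))
          - 2 * g12 p * Bmid (fderiv ℝ (fderiv ℝ ψ) p (1, 0) (0, 1)) (fderiv ℝ ψ p (0, 1))
          + g11 p * Bmid (fderiv ℝ (fderiv ℝ ψ) p (0, 1) (0, 1)) (fderiv ℝ ψ p (0, 1)) := by
      linarith [hmA2]
    have hH1 : (H p).1 = bconst / 2 :=
      algebra_main (g11 p) (g12 p) (g22 p) (fderiv ℝ f p (1, 0)) (fderiv ℝ f p (0, 1))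
        (fderiv ℝ (fderiv ℝ f) p (1, 0) (1, 0)) (fderiv ℝ (fderiv ℝ f) p (1, 0) (0, 1))
        (fderiv ℝ (fderiv ℝ f) p (0, 1) (0, 1))
        (Bmid (fderiv ℝ (fderiv ℝ ψ) p (1, 0) (1, 0)) (fderiv ℝ ψ p (1, 0)))
        (Bmid (fderiv ℝ (fderiv ℝ ψ) p (1, 0) (0, 1)) (fderiv ℝ ψ p (1, 0)))
        (Bmid (fderiv ℝ (fderiv ℝ ψ) p (1, 0) (1, 0)) (fderiv ℝ ψ p (0, 1)))
        (Bmid (fderiv ℝ (fderiv ℝ ψ) p (1, 0) (0, 1)) (fderiv ℝ ψ p (0, 1)))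
        (Bmid (fderiv ℝ (fderiv ℝ ψ) p (0, 1) (0, 1)) (fderiv ℝ ψ p (1, 0)))
        (Bmid (fderiv ℝ (fderiv ℝ ψ) p (0, 1) (0, 1)) (fderiv ℝ ψ p (0, 1)))
        a c ((H p).1) bconst DDne eqI eqA1 eqA2 eqIV
    have hH3 : (H p).2.2 = bconst / 2 := hH13 ▸ hH1
    have hsmul : (bconst / 2) • ((1 : ℝ), (0 : EuclideanSpace ℝ (Fin k)), (1 : ℝ))
        = (bconst / 2, (0 : EuclideanSpace ℝ (Fin k)), bconst / 2) := by
      simp [Prod.smul_mk]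
    rw [hsmul]
    exact Prod.ext hH1 (Prod.ext hHm hH3)
  
  refine ⟨concl1, key, ?_, ?_⟩
  · intro p
    constructor
    · have h0 : Bmid 0 0 = 0 := by
        have := (hBlin 0).map_smul 0 0
        simpa using this
      rw [key p, hB]
      simp [Prod.smul_def, smul_eq_mul, h0]
    · intro hc
      have h1 := congrArg Prod.fst ((key p).symm.trans hc)
      simp at h1
      exact hb h1
  · intro p X
    refine ⟨0, 0, ?_⟩
    have hHc : H = fun _ => (bconst / 2) • ((1 : ℝ), (0 : EuclideanSpace ℝ (Fin k)), (1 : ℝ)) :=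
      funext key
    rw [hHc, fderiv_fun_const]
    simp
end

section
/- For each t ∈ [0, 2π), the polynomial f(t, s) = 27s⁴ − 18s² + 8s cos t − 1 has a unique positive root ω(t) in (0, 1]. -/
/- STATEMENT 13: For each t ∈ [0, 2π), the polynomial
   f(t,s) = 27s⁴ − 18s² + 8s cos t − 1 has a unique positive root ω(t), lying in (0,1]. -/
theorem stmt_13 (t : ℝ) (ht0 : 0 ≤ t) (ht1 : t < 2 * Real.pi) :
    ∃ s : ℝ, (0 < s ∧ s ≤ 1 ∧ 27 * s ^ 4 - 18 * s ^ 2 + 8 * s * Real.cos t - 1 = 0) ∧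
      ∀ s' : ℝ, 0 < s' → 27 * s' ^ 4 - 18 * s' ^ 2 + 8 * s' * Real.cos t - 1 = 0 → s' = s := by
  have hc1 : Real.cos t ≤ 1 := Real.cos_le_one t
  have hc2 : -1 ≤ Real.cos t := Real.neg_one_le_cos t
  set F : ℝ → ℝ := fun s => 27 * s ^ 4 - 18 * s ^ 2 + 8 * s * Real.cos t - 1 with hF
  have hcont : ContinuousOn F (Set.Icc (1/9 : ℝ) 1) := by
    apply Continuous.continuousOn; fun_prop
  have hivt := intermediate_value_Icc (by norm_num : (1/9 : ℝ) ≤ 1) hcont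
  have h0mem : (0 : ℝ) ∈ Set.Icc (F (1/9)) (F 1) := by
    constructor
    · simp only [hF]; nlinarith
    · simp only [hF]; nlinarith
  obtain ⟨s, hsmem, hfs⟩ := hivt h0mem
  refine ⟨s, ⟨by linarith [hsmem.1], hsmem.2, hfs⟩, ?_⟩
  intro s' hs' hfs'
  have hs0 : (0:ℝ) < s := by linarith [hsmem.1]
  by_contra hne
  have hkey : (s' - s) * (27 * s * s' * (s' - s) ^ 2 + (9 * s * s' - 1) ^ 2) = 0 := by
    have hid : s * (27 * s' ^ 4 - 18 * s' ^ 2 + 8 * s' * Real.cos t - 1)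
        - s' * (27 * s ^ 4 - 18 * s ^ 2 + 8 * s * Real.cos t - 1)
        = (s' - s) * (27 * s * s' * (s' - s) ^ 2 + (9 * s * s' - 1) ^ 2) := by ring
    have hfs0 : 27 * s ^ 4 - 18 * s ^ 2 + 8 * s * Real.cos t - 1 = 0 := hfs
    rw [hfs', hfs0] at hid
    linarith [hid]
  rcases mul_eq_zero.mp hkey with h | h
  · exact hne (by linarith)
  · have hd : (0:ℝ) < (s' - s) ^ 2 := by
      have : s' - s ≠ 0 := sub_ne_zero.mpr hne
      positivity
    nlinarith [sq_nonneg (9 * s * s' - 1), mul_pos hs0 hs']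
end

section
/- Define X₊: M → S ⊂ C³ by the explicit formula ᵗX₊(u,v) = (csc 2u / (2√(1+cos²u))) · A · (e^v(3 + 2√2 cos²u + e^{−2iu}), e^{−v}(3 − 2√2 cos²u + e^{2iu}), 4cos³u + 2√2 i sin u), where A is the matrix [[1,1,1],[0,1,1],[1,0,1]] and S = {(u₀,u₁,u₂) ∈ C³ : −|u₀|² + |u₁|² + |u₂|² = −1}. Then X₊ actually takes values in S, i.e., −|X₊⁰|² + |X₊¹|² + |X₊²|² = −1 for all (u,v) ∈ (0, π/2) × R. -/
/-!
Pulling the Hermitian form back by `A` turns it into `|w₂|² − 2 Re (w₀ w̄₁)`, in which the factors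
`e^{±v}` cancel. The remaining trigonometric expression equals `−16 sin²u cos²u (1 + cos²u)`,
which is exactly `−1/c²`.
-/

open Real Complex
open ComplexConjugate

lemma neg_sq_norm_add_add_add_sq_norm (a b c : ℂ) :
    -‖a + b + c‖ ^ 2 + ‖b + c‖ ^ 2 + ‖a + c‖ ^ 2 = ‖c‖ ^ 2 - 2 * (a * conj b).re := by
  simp only [Complex.sq_norm, Complex.normSq_apply, Complex.mul_re, Complex.conj_re,
    Complex.conj_im, Complex.add_re, Complex.add_im]
  ring

lemma re_exp_mul_mul_conj_exp_neg_mul (v : ℝ) (p q : ℂ) :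
    ((Real.exp v : ℂ) * p * conj ((Real.exp (-v) : ℂ) * q)).re = (p * conj q).re := by
  have h : (Real.exp v : ℂ) * p * conj ((Real.exp (-v) : ℂ) * q)
      = ((Real.exp v * Real.exp (-v) : ℝ) : ℂ) * (p * conj q) := by
    rw [map_mul, Complex.conj_ofReal]; push_cast; ring
  rw [h, ← Real.exp_add, add_neg_cancel, Real.exp_zero, Complex.ofReal_one, one_mul]

lemma exp_two_mul_I_mul (u : ℝ) :
    Complex.exp (2 * Complex.I * u)
      = (Real.cos (2 * u) : ℂ) + (Real.sin (2 * u) : ℂ) * Complex.I := by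
  rw [show 2 * Complex.I * (u : ℂ) = ((2 * u : ℝ) : ℂ) * Complex.I by push_cast; ring,
    Complex.exp_mul_I, ← Complex.ofReal_cos, ← Complex.ofReal_sin]

lemma hirakawa_reduced_form_eq (u : ℝ) :
    ‖((4 * Real.cos u ^ 3 : ℝ) : ℂ) + (2 * Real.sqrt 2 : ℝ) * Complex.I * (Real.sin u : ℝ)‖ ^ 2
      - 2 * (((3 : ℂ) + (2 * Real.sqrt 2 * Real.cos u ^ 2 : ℝ)
          + Complex.exp (-2 * Complex.I * (u : ℂ)))
        * conj ((3 : ℂ) - (2 * Real.sqrt 2 * Real.cos u ^ 2 : ℝ)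
          + Complex.exp (2 * Complex.I * (u : ℂ)))).re
      = -(16 * Real.sin u ^ 2 * Real.cos u ^ 2 * (1 + Real.cos u ^ 2)) := by
  have ht : Real.sqrt 2 ^ 2 = 2 := Real.sq_sqrt (by norm_num)
  rw [show -2 * Complex.I * (u : ℂ) = 2 * Complex.I * ((-u : ℝ) : ℂ) by push_cast; ring,
    exp_two_mul_I_mul, exp_two_mul_I_mul]
  simp only [Complex.sq_norm, Complex.normSq_apply, Complex.mul_re, Complex.mul_im, Complex.add_re,
    Complex.add_im, Complex.sub_re, Complex.sub_im, Complex.conj_re, Complex.conj_im,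
    Complex.ofReal_re, Complex.ofReal_im, Complex.I_re, Complex.I_im, Complex.re_ofNat,
    Complex.im_ofNat, mul_neg, Real.cos_neg, Real.sin_neg, Real.cos_two_mul, Real.sin_two_mul]
  linear_combination (4 * Real.sin u ^ 2 + 8 * Real.cos u ^ 4) * ht
    + (8 + 24 * Real.cos u ^ 2 + 16 * Real.cos u ^ 4) * Real.sin_sq u

lemma sq_hirakawa_scale_mul {u : ℝ} (hu : u ∈ Set.Ioo 0 (π / 2)) :
    ((1 / Real.sin (2 * u)) / (2 * Real.sqrt (1 + Real.cos u ^ 2))) ^ 2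
      * (16 * Real.sin u ^ 2 * Real.cos u ^ 2 * (1 + Real.cos u ^ 2)) = 1 := by
  have hs : Real.sin u ≠ 0 := (Real.sin_pos_of_pos_of_lt_pi hu.1 (by linarith [hu.2, pi_pos])).ne'
  have hc : Real.cos u ≠ 0 := (Real.cos_pos_of_mem_Ioo ⟨by linarith [hu.1, pi_pos], hu.2⟩).ne'
  have hq : Real.sqrt (1 + Real.cos u ^ 2) ^ 2 = 1 + Real.cos u ^ 2 := Real.sq_sqrt (by positivity)
  have hq0 : Real.sqrt (1 + Real.cos u ^ 2) ≠ 0 := by positivity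
  rw [Real.sin_two_mul]
  field_simp
  linear_combination -16 * hq

theorem stmt_14 :
    ∀ u ∈ Set.Ioo (0 : ℝ) (Real.pi / 2), ∀ v : ℝ,
      let c : ℝ := (1 / Real.sin (2 * u)) / (2 * Real.sqrt (1 + Real.cos u ^ 2));
      let w0 : ℂ := (Real.exp v : ℝ) *
        ((3 : ℂ) + (2 * Real.sqrt 2 * Real.cos u ^ 2 : ℝ) + Complex.exp (-2 * Complex.I * (u : ℂ)));
      let w1 : ℂ := (Real.exp (-v) : ℝ) *
        ((3 : ℂ) - (2 * Real.sqrt 2 * Real.cos u ^ 2 : ℝ) + Complex.exp (2 * Complex.I * (u : ℂ)));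
      let w2 : ℂ := (4 * Real.cos u ^ 3 : ℝ) + (2 * Real.sqrt 2 : ℝ) * Complex.I * (Real.sin u : ℝ);
      -- X₊ = c · A · (w0, w1, w2) with A = [[1,1,1],[0,1,1],[1,0,1]]
      let X0 : ℂ := (c : ℝ) * (w0 + w1 + w2);
      let X1 : ℂ := (c : ℝ) * (w1 + w2);
      let X2 : ℂ := (c : ℝ) * (w0 + w2);
      -(‖X0‖) ^ 2 + (‖X1‖) ^ 2 + (‖X2‖) ^ 2 = -1 := by
  intro u hu v c w0 w1 w2 X0 X1 X2
  have norm_scale (z : ℂ) : ‖(c : ℂ) * z‖ ^ 2 = c ^ 2 * ‖z‖ ^ 2 := by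
    rw [norm_mul, Complex.norm_real, Real.norm_eq_abs, mul_pow, sq_abs]
  calc -‖X0‖ ^ 2 + ‖X1‖ ^ 2 + ‖X2‖ ^ 2
      = c ^ 2 * (-‖w0 + w1 + w2‖ ^ 2 + ‖w1 + w2‖ ^ 2 + ‖w0 + w2‖ ^ 2) := by
        simp only [X0, X1, X2, norm_scale]; ring
    _ = c ^ 2 * (‖w2‖ ^ 2 - 2 * (w0 * conj w1).re) := by
        rw [neg_sq_norm_add_add_add_sq_norm]
    _ = c ^ 2 * -(16 * Real.sin u ^ 2 * Real.cos u ^ 2 * (1 + Real.cos u ^ 2)) := by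
        rw [re_exp_mul_mul_conj_exp_neg_mul, hirakawa_reduced_form_eq]
    _ = -1 := by
        rw [mul_neg, sq_hirakawa_scale_mul hu]
end

section
/- The Riemannian metric ds² = (2/(b² sin²(2u)))(du² + dv²) on M = (0, π/2) × R has constant Gaussian curvature −2b², and (M, ds²) is a complete Riemannian manifold. -/
open Real MeasureTheory Set Filter

/-!
With `λ u = √2 / (b sin 2u)` one has `(log λ)'' = 4 / sin² 2u = 2 b² λ²`, which gives the curvature.

For completeness, use the chart `(u, v) ↦ (log tan u, v)`, a homeomorphism of `M` onto `ℝ²`.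
Since `(log tan)' u = 2 / sin 2u = √2 b λ u ≥ 1`, the sup-norm speed of the image of a curve is at
most `√2 b` times its `λ`-speed. A curve of finite length therefore has its image in a closed
ball, i.e. it stays in the compact preimage of that ball and cannot leave every compact set.
-/

noncomputable def conformalFactor (b u : ℝ) : ℝ := √2 / (b * sin (2 * u))

/-- Gaussian curvature `-λ⁻² Δ(log λ)` of `λ(u)² (du² + dv²)`, for `λ` depending on `u` only. -/
noncomputable def conformalCurvature (lam : ℝ → ℝ) (u : ℝ) : ℝ :=
  -(1 / lam u ^ 2) * deriv (deriv fun w => log (lam w)) u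

lemma sin_two_mul_pos {x : ℝ} (hx : x ∈ Ioo 0 (π / 2)) : 0 < sin (2 * x) :=
  sin_pos_of_pos_of_lt_pi (by linarith [hx.1]) (by linarith [hx.2])

lemma hasDerivAt_sin_two_mul (x : ℝ) : HasDerivAt (fun w => sin (2 * w)) (2 * cos (2 * x)) x :=
  (((hasDerivAt_id' x).const_mul 2).sin).congr_deriv (by ring)

lemma hasDerivAt_cos_two_mul (x : ℝ) : HasDerivAt (fun w => cos (2 * w)) (-(2 * sin (2 * x))) x :=
  (((hasDerivAt_id' x).const_mul 2).cos).congr_deriv (by ring)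

lemma hasDerivAt_log_conformalFactor {b x : ℝ} (hb : b ≠ 0) (hx : sin (2 * x) ≠ 0) :
    HasDerivAt (fun w => log (conformalFactor b w)) (-(2 * cos (2 * x) / sin (2 * x))) x := by
  have hfactor : HasDerivAt (conformalFactor b)
      ((0 * (b * sin (2 * x)) - √2 * (b * (2 * cos (2 * x)))) / (b * sin (2 * x)) ^ 2) x :=
    (hasDerivAt_const x √2).div ((hasDerivAt_sin_two_mul x).const_mul b) (mul_ne_zero hb hx)
  refine (hfactor.log (by unfold conformalFactor; positivity)).congr_deriv ?_
  unfold conformalFactor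
  field_simp
  ring

lemma hasDerivAt_neg_two_cos_div_sin_two_mul {x : ℝ} (hx : sin (2 * x) ≠ 0) :
    HasDerivAt (fun w => -(2 * cos (2 * w) / sin (2 * w))) (4 / sin (2 * x) ^ 2) x := by
  refine ((((hasDerivAt_cos_two_mul x).const_mul 2).div (hasDerivAt_sin_two_mul x) hx).neg
    ).congr_deriv ?_
  field_simp
  linear_combination 4 * sin_sq_add_cos_sq (2 * x)

lemma deriv_deriv_log_conformalFactor {b x : ℝ} (hb : b ≠ 0) (hx : sin (2 * x) ≠ 0) :
    deriv (deriv fun w => log (conformalFactor b w)) x = 4 / sin (2 * x) ^ 2 := by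
  have hderiv : deriv (fun w => log (conformalFactor b w)) =ᶠ[nhds x]
      fun w => -(2 * cos (2 * w) / sin (2 * w)) := by
    have hopen : IsOpen {w : ℝ | sin (2 * w) ≠ 0} := isOpen_ne.preimage (by fun_prop)
    filter_upwards [hopen.mem_nhds hx] with w hw
    exact (hasDerivAt_log_conformalFactor hb hw).deriv
  rw [hderiv.deriv_eq, (hasDerivAt_neg_two_cos_div_sin_two_mul hx).deriv]

theorem conformalCurvature_conformalFactor {b x : ℝ} (hb : b ≠ 0) (hx : sin (2 * x) ≠ 0) :
    conformalCurvature (conformalFactor b) x = -(2 * b ^ 2) := by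
  rw [conformalCurvature, deriv_deriv_log_conformalFactor hb hx, conformalFactor]
  field_simp
  norm_num

lemma sqrt_two_mul_mul_conformalFactor {b : ℝ} (hb : b ≠ 0) (x : ℝ) :
    √2 * b * conformalFactor b x = 2 / sin (2 * x) := by
  rw [conformalFactor, mul_div_assoc', mul_right_comm, mul_self_sqrt zero_le_two, mul_comm b,
    mul_div_mul_right _ _ hb]

lemma hasDerivAt_log_tan {x : ℝ} (hx : sin (2 * x) ≠ 0) :
    HasDerivAt (fun y => log (tan y)) (2 / sin (2 * x)) x := by
  rw [sin_two_mul] at hx ⊢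
  have hsin : sin x ≠ 0 := by intro h; simp [h] at hx
  have hcos : cos x ≠ 0 := by intro h; simp [h] at hx
  refine ((hasDerivAt_tan hcos).log ?_).congr_deriv ?_
  · rw [tan_eq_sin_div_cos]; exact div_ne_zero hsin hcos
  · rw [tan_eq_sin_div_cos]; field_simp

noncomputable def logTanChart (p : ℝ × ℝ) : ℝ × ℝ := (log (tan p.1), p.2)

noncomputable def logTanChartInv (q : ℝ × ℝ) : ℝ × ℝ := (arctan (exp q.1), q.2)

lemma continuous_logTanChartInv : Continuous logTanChartInv := by
  unfold logTanChartInv; fun_prop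

lemma logTanChartInv_mem (q : ℝ × ℝ) : logTanChartInv q ∈ Ioo 0 (π / 2) ×ˢ (univ : Set ℝ) :=
  ⟨⟨arctan_pos.2 (exp_pos _), arctan_lt_pi_div_two _⟩, trivial⟩

lemma logTanChartInv_logTanChart {p : ℝ × ℝ} (hp : p.1 ∈ Ioo 0 (π / 2)) :
    logTanChartInv (logTanChart p) = p := by
  have htan : 0 < tan p.1 := tan_pos_of_pos_of_lt_pi_div_two hp.1 hp.2
  simp only [logTanChartInv, logTanChart, exp_log htan,
    arctan_tan (by linarith [hp.1, pi_pos]) hp.2]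

lemma continuousOn_logTanChart : ContinuousOn logTanChart (Ioo 0 (π / 2) ×ˢ univ) :=
  fun _ hp => (((hasDerivAt_log_tan (sin_two_mul_pos hp.1).ne').continuousAt.comp
    continuousAt_fst).prodMk continuousAt_snd).continuousWithinAt

lemma hasDerivAt_logTanChart_comp {γ : ℝ → ℝ × ℝ} {γ' : ℝ × ℝ} {s : ℝ}
    (hγ : HasDerivAt γ γ' s) (hs : sin (2 * (γ s).1) ≠ 0) :
    HasDerivAt (logTanChart ∘ γ) (2 / sin (2 * (γ s).1) * γ'.1, γ'.2) s := by
  have hfst : HasDerivAt (fun t => (γ t).1) γ'.1 s :=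
    (ContinuousLinearMap.fst ℝ ℝ ℝ).hasFDerivAt.comp_hasDerivAt s hγ
  have hsnd : HasDerivAt (fun t => (γ t).2) γ'.2 s :=
    (ContinuousLinearMap.snd ℝ ℝ ℝ).hasFDerivAt.comp_hasDerivAt s hγ
  exact ((hasDerivAt_log_tan hs).comp s hfst).prodMk hsnd

lemma norm_logTanChart_deriv_le {x : ℝ} (hx : x ∈ Ioo 0 (π / 2)) (w : ℝ × ℝ) :
    ‖(2 / sin (2 * x) * w.1, w.2)‖ ≤ 2 / sin (2 * x) * ‖w‖ := by
  have hsin := sin_two_mul_pos hx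
  have hone : 1 ≤ 2 / sin (2 * x) := by
    rw [le_div_iff₀ hsin]; linarith [sin_le_one (2 * x)]
  rw [norm_prod_le_iff, norm_mul, Real.norm_of_nonneg (by positivity)]
  exact ⟨mul_le_mul_of_nonneg_left (norm_fst_le w) (by positivity),
    (norm_snd_le w).trans (le_mul_of_one_le_left (norm_nonneg w) hone)⟩

lemma norm_logTanChart_sub_le {γ : ℝ → ℝ × ℝ} (hγ : ContDiffOn ℝ 1 γ (Ico 0 1))
    (hM : ∀ t ∈ Ico (0 : ℝ) 1, (γ t).1 ∈ Ioo 0 (π / 2))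
    (hlen : IntervalIntegrable (fun t => 2 / sin (2 * (γ t).1) * ‖deriv γ t‖) volume 0 1)
    {t : ℝ} (ht : t ∈ Ico (0 : ℝ) 1) :
    ‖logTanChart (γ t) - logTanChart (γ 0)‖ ≤
      ∫ s in (0 : ℝ)..1, 2 / sin (2 * (γ s).1) * ‖deriv γ s‖ := by
  have hderiv : ∀ s ∈ Ioo (0 : ℝ) 1, HasDerivAt (logTanChart ∘ γ)
      (2 / sin (2 * (γ s).1) * (deriv γ s).1, (deriv γ s).2) s := fun s hs =>
    hasDerivAt_logTanChart_comp
      ((hγ.contDiffAt (Ico_mem_nhds hs.1 hs.2)).differentiableAt one_ne_zero).hasDerivAt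
      (sin_two_mul_pos (hM s (Ioo_subset_Ico_self hs))).ne'
  have hspeed_nonneg : 0 ≤ᵐ[volume.restrict (Ioc 0 1)]
      fun s => 2 / sin (2 * (γ s).1) * ‖deriv γ s‖ := by
    rw [← Measure.restrict_congr_set Ioo_ae_eq_Ioc, EventuallyLE,
      ae_restrict_iff' measurableSet_Ioo]
    refine .of_forall fun s hs => ?_
    have := sin_two_mul_pos (hM s (Ioo_subset_Ico_self hs))
    positivity
  calc ‖logTanChart (γ t) - logTanChart (γ 0)‖
      ≤ ∫ s in (0 : ℝ)..t, 2 / sin (2 * (γ s).1) * ‖deriv γ s‖ := by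
        refine norm_sub_le_integral_of_norm_deriv_le_of_le ht.1
          ((continuousOn_logTanChart.comp hγ.continuousOn fun s hs => ⟨hM s hs, trivial⟩).mono
            (Icc_subset_Ico_right ht.2))
          (fun s hs => (hderiv s ⟨hs.1, hs.2.trans ht.2⟩).differentiableAt.differentiableWithinAt)
          (.of_forall fun s hs => ?_)
          (hlen.mono_set (by
            rw [uIcc_of_le ht.1, uIcc_of_le zero_le_one]
            exact Icc_subset_Icc_right ht.2.le))
        rw [(hderiv s ⟨hs.1, hs.2.trans ht.2⟩).deriv]
        exact norm_logTanChart_deriv_le (hM s ⟨hs.1.le, hs.2.trans ht.2⟩) _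
    _ ≤ ∫ s in (0 : ℝ)..1, 2 / sin (2 * (γ s).1) * ‖deriv γ s‖ :=
        intervalIntegral.integral_mono_interval le_rfl ht.1 ht.2.le hspeed_nonneg hlen

lemma exists_isCompact_forall_mem_of_intervalIntegrable {γ : ℝ → ℝ × ℝ}
    (hγ : ContDiffOn ℝ 1 γ (Ico 0 1))
    (hM : ∀ t ∈ Ico (0 : ℝ) 1, (γ t).1 ∈ Ioo 0 (π / 2))
    (hlen : IntervalIntegrable (fun t => 2 / sin (2 * (γ t).1) * ‖deriv γ t‖) volume 0 1) :
    ∃ K ⊆ Ioo 0 (π / 2) ×ˢ (univ : Set ℝ), IsCompact K ∧ ∀ t ∈ Ico (0 : ℝ) 1, γ t ∈ K := by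
  refine ⟨logTanChartInv '' Metric.closedBall (logTanChart (γ 0))
      (∫ s in (0 : ℝ)..1, 2 / sin (2 * (γ s).1) * ‖deriv γ s‖),
    image_subset_iff.2 fun q _ => logTanChartInv_mem q,
    (isCompact_closedBall _ _).image continuous_logTanChartInv,
    fun t ht => ⟨logTanChart (γ t), ?_, logTanChartInv_logTanChart (hM t ht)⟩⟩
  rw [Metric.mem_closedBall, dist_eq_norm]
  exact norm_logTanChart_sub_le hγ hM hlen ht

theorem stmt_15 (b : ℝ) (hb : 0 < b) :
    -- constant Gaussian curvature −2b²
    (∀ u ∈ Set.Ioo (0 : ℝ) (Real.pi / 2),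
      -(1 / (Real.sqrt 2 / (b * Real.sin (2 * u))) ^ 2) *
        deriv (deriv (fun w => Real.log (Real.sqrt 2 / (b * Real.sin (2 * w))))) u
      = -(2 * b ^ 2)) ∧
    -- completeness: divergent curves have infinite length
    (∀ γ : ℝ → ℝ × ℝ, ContDiffOn ℝ 1 γ (Set.Ico (0 : ℝ) 1) →
      (∀ t ∈ Set.Ico (0 : ℝ) 1, (γ t).1 ∈ Set.Ioo (0 : ℝ) (Real.pi / 2)) →
      (∀ K : Set (ℝ × ℝ), K ⊆ (Set.Ioo (0 : ℝ) (Real.pi / 2)) ×ˢ (Set.univ : Set ℝ) →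
        IsCompact K → ∀ᶠ t in nhdsWithin 1 (Set.Iio (1 : ℝ)), γ t ∉ K) →
      ¬ IntervalIntegrable
          (fun t => (Real.sqrt 2 / (b * Real.sin (2 * (γ t).1))) * ‖deriv γ t‖)
          MeasureTheory.volume 0 1) := by
  refine ⟨fun u hu => conformalCurvature_conformalFactor hb.ne' (sin_two_mul_pos hu).ne', ?_⟩
  intro γ hγ hM hdiverge hlen
  have hlen' : IntervalIntegrable (fun t => 2 / sin (2 * (γ t).1) * ‖deriv γ t‖) volume 0 1 := by
    convert hlen.const_mul (√2 * b) using 2 with t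
    rw [← mul_assoc, ← sqrt_two_mul_mul_conformalFactor hb.ne']
    rfl
  obtain ⟨K, hKM, hK, hγK⟩ := exists_isCompact_forall_mem_of_intervalIntegrable hγ hM hlen'
  obtain ⟨t, htK, ht⟩ := ((hdiverge K hKM hK).and (Ioo_mem_nhdsLT zero_lt_one)).exists
  exact htK (hγK t (Ioo_subset_Ico_self ht))
end
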